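/- arXiv:1608.03452 — 8 statements merged into one kernel-verified Lean document; each statement's English description precedes it below -/
import Mathlib

section
/- Let X be a normed vector space, A ⊆ X a convex set, a ∈ X and β ∈ A a nearest point of A to a, i.e., ‖a − y‖ ≥ ‖a − β‖ for all y ∈ A. Suppose a ≠ β, let δ > 0, set λ = ‖a − β‖/(δ + ‖a − β‖), and let h = (1/λ)a + β − (1/λ)β (so that a = λh + (1−λ)β). Then ‖h − y‖ ≥ ‖h − β‖ for all y ∈ A; moreover ‖h − a‖ = δ and ‖h − β‖ = δ + ‖a − β‖. -/
/-!
Moving `a` away from its nearest point `β` along the ray from `β` keeps `β` nearest: if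
`h = β + t • (a - β)` with `t ≥ 1` and `y ∈ A`, then `z = β + t⁻¹ • (y - β) ∈ A` by convexity
and `a - z = t⁻¹ • (h - y)`, so `t⁻¹ ‖h - β‖ = ‖a - β‖ ≤ ‖a - z‖ = t⁻¹ ‖h - y‖`.
With `t = 1 / λ = (δ + ‖a - β‖) / ‖a - β‖` the two distances are read off directly.
-/

section

variable {X : Type*} [NormedAddCommGroup X] [NormedSpace ℝ X]

theorem norm_add_smul_sub_sub_left (a β : X) {t : ℝ} (ht : 0 ≤ t) :
    ‖(β + t • (a - β)) - β‖ = t * ‖a - β‖ := by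
  rw [add_sub_cancel_left, norm_smul, Real.norm_of_nonneg ht]

theorem Convex.norm_sub_le_of_nearest_of_one_le {A : Set X} (hA : Convex ℝ A) {a β : X}
    (hβ : β ∈ A) (hnear : ∀ y ∈ A, ‖a - β‖ ≤ ‖a - y‖) {t : ℝ} (ht : 1 ≤ t) :
    ∀ y ∈ A, ‖(β + t • (a - β)) - β‖ ≤ ‖(β + t • (a - β)) - y‖ := by
  intro y hy
  have ht₀ : 0 < t := by linarith
  have hz : β + t⁻¹ • (y - β) ∈ A :=
    hA.add_smul_sub_mem hβ hy ⟨by positivity, inv_le_one_of_one_le₀ ht⟩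
  have hdiff : a - (β + t⁻¹ • (y - β)) = t⁻¹ • ((β + t • (a - β)) - y) := by
    rw [smul_sub t⁻¹ _ y, smul_add, smul_smul, inv_mul_cancel₀ ht₀.ne', one_smul, smul_sub]
    abel
  have hle := hnear _ hz
  rw [hdiff, norm_smul, Real.norm_of_nonneg (by positivity)] at hle
  rw [norm_add_smul_sub_sub_left a β ht₀.le]
  rwa [← le_inv_mul_iff₀ ht₀]

theorem norm_add_smul_sub_sub_right (a β : X) {t : ℝ} (ht : 1 ≤ t) :
    ‖(β + t • (a - β)) - a‖ = (t - 1) * ‖a - β‖ := by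
  have hsub : β + t • (a - β) - a = (t - 1) • (a - β) := by
    rw [sub_smul, one_smul]
    abel
  rw [hsub, norm_smul, Real.norm_of_nonneg (by linarith)]

end

/-- The computation inside the proof of Lemma 3.1: if `β` is a nearest point of the convex
set `A` to `a`, `a ≠ β`, `δ > 0`, `λ = ‖a − β‖/(δ + ‖a − β‖)` and
`h = (1/λ)a + β − (1/λ)β`, then `β` is also a nearest point of `A` to `h`,
`‖h − a‖ = δ` and `‖h − β‖ = δ + ‖a − β‖`. -/
theorem stmt_2 {X : Type*} [NormedAddCommGroup X] [NormedSpace ℝ X]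
    (A : Set X) (hAconv : Convex ℝ A)
    (a β : X) (hβ : β ∈ A)
    (hnear : ∀ y ∈ A, ‖a - β‖ ≤ ‖a - y‖)
    (hne : a ≠ β) (δ : ℝ) (hδ : 0 < δ)
    (lam : ℝ) (hlam : lam = ‖a - β‖ / (δ + ‖a - β‖))
    (h : X) (hh : h = (1 / lam) • a + β - (1 / lam) • β) :
    (∀ y ∈ A, ‖h - β‖ ≤ ‖h - y‖) ∧ ‖h - a‖ = δ ∧ ‖h - β‖ = δ + ‖a - β‖ := by
  set r := ‖a - β‖
  have hr : 0 < r := norm_pos_iff.mpr (sub_ne_zero.mpr hne)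
  set t := (δ + r) / r with ht_def
  have ht : 1 ≤ t := by rw [le_div_iff₀ hr]; linarith
  have hh_ray : h = β + t • (a - β) := by
    rw [hh, hlam, one_div_div, smul_sub]
    abel
  subst hh_ray
  refine ⟨hAconv.norm_sub_le_of_nearest_of_one_le hβ hnear ht, ?_, ?_⟩
  · rw [norm_add_smul_sub_sub_right a β ht, ht_def]
    field_simp
    ring
  · rw [norm_add_smul_sub_sub_left a β (by linarith), ht_def]
    field_simp
    rfl
end

section
/- Let Λ be a normed vector space, X a reflexive Banach space, A a nonempty compact convex subset of X, and T : A × Λ → 2^A a set-valued mapping, with solution mapping S(λ) = {x ∈ A : x ∈ T(x, λ)}. Let λ₀ ∈ Λ. Assume: (i) T(·, λ₀) is rotund; (ii) T is continuous (both u.s.c. and l.s.c.) at every point of A × {λ₀}, with nonempty closed convex values; (iii) S(λ) ≠ ∅ for all λ in a neighborhood of λ₀. Then S(·) is lower semicontinuous at λ₀. -/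
open Filter Topology Set Pointwise

/-- A set-valued mapping `Φ` is lower semicontinuous at `u₀` if for every `x ∈ Φ(u₀)` and
every open neighborhood `V` of `x` there is a neighborhood `U` of `u₀` such that
`Φ(u) ∩ V ≠ ∅` for all `u ∈ U`. -/
def LscAt {Δ Δ₁ : Type*} [TopologicalSpace Δ] [TopologicalSpace Δ₁]
    (Φ : Δ → Set Δ₁) (u₀ : Δ) : Prop :=
  ∀ x ∈ Φ u₀, ∀ V : Set Δ₁, IsOpen V → x ∈ V →
    ∃ U ∈ 𝓝 u₀, ∀ u ∈ U, (Φ u ∩ V).Nonempty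

/-- Lower semicontinuity at `u₀` of a set-valued mapping whose domain is the subset `s`
(neighborhoods are taken relative to `s`). -/
def LscWithinAt {Δ Δ₁ : Type*} [TopologicalSpace Δ] [TopologicalSpace Δ₁]
    (Φ : Δ → Set Δ₁) (s : Set Δ) (u₀ : Δ) : Prop :=
  ∀ x ∈ Φ u₀, ∀ V : Set Δ₁, IsOpen V → x ∈ V →
    ∃ U ∈ 𝓝[s] u₀, ∀ u ∈ U, (Φ u ∩ V).Nonempty

/-- A set-valued mapping `Φ` is upper semicontinuous at `u₀` if for every open `V ⊇ Φ(u₀)`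
there is a neighborhood `U` of `u₀` with `Φ(u) ⊆ V` for all `u ∈ U`. -/
def UscAt {Δ Δ₁ : Type*} [TopologicalSpace Δ] [TopologicalSpace Δ₁]
    (Φ : Δ → Set Δ₁) (u₀ : Δ) : Prop :=
  ∀ V : Set Δ₁, IsOpen V → Φ u₀ ⊆ V → ∃ U ∈ 𝓝 u₀, ∀ u ∈ U, Φ u ⊆ V

/-- Upper semicontinuity at `u₀` of a set-valued mapping whose domain is the subset `s`
(neighborhoods are taken relative to `s`). -/
def UscWithinAt {Δ Δ₁ : Type*} [TopologicalSpace Δ] [TopologicalSpace Δ₁]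
    (Φ : Δ → Set Δ₁) (s : Set Δ) (u₀ : Δ) : Prop :=
  ∀ V : Set Δ₁, IsOpen V → Φ u₀ ⊆ V → ∃ U ∈ 𝓝[s] u₀, ∀ u ∈ U, Φ u ⊆ V

/-- The graph of a set-valued mapping `Φ` with domain `A`. -/
def GraphOn {X Z : Type*} (A : Set X) (Φ : X → Set Z) : Set (X × Z) :=
  {p | p.1 ∈ A ∧ p.2 ∈ Φ p.1}

/-- A set-valued mapping `Φ` with domain `A` is rotund if its graph is convex and, for any
two points of the graph with distinct first components and distinct second components,
the open segment between them meets the complement of the boundary of the graph. -/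
def RotundOn {X Z : Type*} [NormedAddCommGroup X] [NormedSpace ℝ X]
    [NormedAddCommGroup Z] [NormedSpace ℝ Z] (A : Set X) (Φ : X → Set Z) : Prop :=
  Convex ℝ (GraphOn A Φ) ∧
    ∀ p ∈ GraphOn A Φ, ∀ q ∈ GraphOn A Φ, p.1 ≠ q.1 → p.2 ≠ q.2 →
      ∃ l ∈ Set.Ioo (0 : ℝ) 1, l • p + (1 - l) • q ∈ (frontier (GraphOn A Φ))ᶜ

lemma mem_of_near_closedBall {X : Type*} [NormedAddCommGroup X] [NormedSpace ℝ X]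
    {C : Set X} (hCconv : Convex ℝ C) (hCcl : IsClosed C) {w : X} {r : ℝ} (hr : 0 < r)
    (h : ∀ y ∈ Metric.closedBall w r, ∃ c ∈ C, dist c y < r / 2) : w ∈ C := by
  by_contra hw
  obtain ⟨f, s, hfs, hsw⟩ := geometric_hahn_banach_closed_point hCconv hCcl hw
  have hfne : f ≠ 0 := by
    rintro rfl
    obtain ⟨c₀, hc₀, -⟩ := h w (Metric.mem_closedBall_self hr.le)
    have h1 := hfs c₀ hc₀
    simp only [ContinuousLinearMap.zero_apply] at h1 hsw
    linarith
  have hfn : (0:ℝ) < ‖f‖ := norm_pos_iff.mpr hfne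
  obtain ⟨x, hx⟩ : ∃ x : X, 3/4 * ‖f‖ * ‖x‖ < ‖f x‖ := by
    by_contra hcon
    push_neg at hcon
    have hb := f.opNorm_le_bound (by positivity) fun x => hcon x
    nlinarith
  have hx0 : x ≠ 0 := by
    rintro rfl
    simp at hx
  have hxn : (0:ℝ) < ‖x‖ := norm_pos_iff.mpr hx0
  set v : X := ‖x‖⁻¹ • x with hv
  have hvn : ‖v‖ = 1 := by
    rw [hv, norm_smul, norm_inv, norm_norm, inv_mul_cancel₀ hxn.ne']
  have hfv : 3/4 * ‖f‖ < |f v| := by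
    have hfveq : f v = ‖x‖⁻¹ * f x := by rw [hv, map_smul]; simp
    have : |f v| = ‖x‖⁻¹ * |f x| := by
      rw [hfveq, abs_mul, abs_inv, abs_norm]
    rw [this]
    rw [Real.norm_eq_abs] at hx
    calc 3/4 * ‖f‖ = ‖x‖⁻¹ * (3/4 * ‖f‖ * ‖x‖) := by field_simp
    _ < ‖x‖⁻¹ * |f x| := by
      exact mul_lt_mul_of_pos_left hx (inv_pos.mpr hxn)
  obtain ⟨u, hun, hfu⟩ : ∃ u : X, ‖u‖ = 1 ∧ 3/4 * ‖f‖ < f u := by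
    rcases le_or_gt 0 (f v) with h0 | h0
    · exact ⟨v, hvn, by rwa [abs_of_nonneg h0] at hfv⟩
    · exact ⟨-v, by simpa using hvn, by rw [map_neg]; rwa [abs_of_neg h0] at hfv⟩
  set y := w + r • u with hy
  have hymem : y ∈ Metric.closedBall w r := by
    rw [Metric.mem_closedBall, dist_eq_norm, hy, add_sub_cancel_left, norm_smul, hun,
      Real.norm_eq_abs, abs_of_pos hr, mul_one]
  obtain ⟨c, hcC, hcy⟩ := h y hymem
  have h1 : f c < s := hfs c hcC
  have h2 : f y = f w + r * f u := by rw [hy, map_add, map_smul]; simp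
  have h3 : f y - f c ≤ ‖f‖ * dist c y := by
    have h4 := f.le_opNorm (y - c)
    have h5 : f y - f c ≤ ‖f (y - c)‖ := by rw [map_sub]; exact le_abs_self _
    rw [dist_eq_norm, norm_sub_rev (c)]
    exact h5.trans h4
  have e1 : ‖f‖ * dist c y ≤ ‖f‖ * (r/2) := mul_le_mul_of_nonneg_left hcy.le hfn.le
  have e2 : r * (3/4 * ‖f‖) < r * f u := mul_lt_mul_of_pos_left hfu hr
  have e3 : 0 < r * ‖f‖ := mul_pos hr hfn
  linarith


/-- Theorem 3.1: lower semicontinuity of the solution mapping `S(λ) = {x ∈ A : x ∈ T(x,λ)}`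
of the parametric fixed point problem at `l₀`, where `X` is a reflexive Banach space
(reflexivity encoded as surjectivity of the canonical inclusion into the double dual),
`A` is nonempty compact convex, `T(·,l₀)` is rotund, and `T` is continuous at every point
of `A × {l₀}` with nonempty closed convex values. -/
theorem stmt_4 {Λ X : Type*} [NormedAddCommGroup Λ] [NormedSpace ℝ Λ]
    [NormedAddCommGroup X] [NormedSpace ℝ X] [CompleteSpace X]
    (hrefl : Function.Surjective (NormedSpace.inclusionInDoubleDual ℝ X))
    (A : Set X) (hAne : A.Nonempty) (hAcomp : IsCompact A) (hAconv : Convex ℝ A)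
    (T : X → Λ → Set X) (hTA : ∀ x ∈ A, ∀ l : Λ, T x l ⊆ A)
    (l₀ : Λ)
    (hrot : RotundOn A (fun x => T x l₀))
    (hcont : ∀ x ∈ A,
      UscWithinAt (fun p : X × Λ => T p.1 p.2) (A ×ˢ (univ : Set Λ)) (x, l₀) ∧
      LscWithinAt (fun p : X × Λ => T p.1 p.2) (A ×ˢ (univ : Set Λ)) (x, l₀))
    (hval : ∀ x ∈ A, ∀ l : Λ, (T x l).Nonempty ∧ IsClosed (T x l) ∧ Convex ℝ (T x l))
    (hSne : ∃ U ∈ 𝓝 l₀, ∀ l ∈ U, {x ∈ A | x ∈ T x l}.Nonempty) :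
    LscAt (fun l : Λ => {x ∈ A | x ∈ T x l}) l₀ := by
  intro x₀ hx₀ V hV hx₀V
  obtain ⟨hx₀A, hx₀T⟩ := hx₀
  rw [← eventually_iff_exists_mem]
  by_cases hS : ∃ x₁, x₁ ∈ A ∧ x₁ ∈ T x₁ l₀ ∧ x₁ ≠ x₀
  · -- Case A: a second fixed point exists; rotundity gives interior points of the graph.
    obtain ⟨x₁, hx₁A, hx₁T, hx₁ne⟩ := hS
    set G : Set (X × X) := GraphOn A (fun x => T x l₀) with hGdef
    obtain ⟨hGconv, hGrot⟩ := hrot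
    have hp : ((x₀, x₀) : X × X) ∈ G := ⟨hx₀A, hx₀T⟩
    have hq : ((x₁, x₁) : X × X) ∈ G := ⟨hx₁A, hx₁T⟩
    obtain ⟨l, hl, hm⟩ := hGrot _ hp _ hq (hx₁ne.symm) (hx₁ne.symm)
    set z : X := l • x₀ + (1 - l) • x₁ with hzdef
    have hmz : l • ((x₀, x₀) : X × X) + (1 - l) • ((x₁, x₁) : X × X) = (z, z) := by
      simp [hzdef, Prod.ext_iff]
    have hmG : ((z, z) : X × X) ∈ G := by
      rw [← hmz]
      exact hGconv hp hq hl.1.le (by linarith [hl.2]) (by ring)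
    have hzz : ((z, z) : X × X) ∈ interior G := by
      rw [hmz] at hm
      by_contra hcon
      exact hm ⟨subset_closure hmG, hcon⟩
    -- choose a point w on the segment [x₀, z], close to x₀, inside V
    obtain ⟨rV, hrV, hballV⟩ := Metric.isOpen_iff.mp hV x₀ hx₀V
    set d : ℝ := ‖z - x₀‖ with hd
    have hd0 : 0 ≤ d := norm_nonneg _
    set t : ℝ := min 1 (rV / (2 * (d + 1))) with ht
    have ht0 : 0 < t := lt_min one_pos (by positivity)
    have ht1 : t ≤ 1 := min_le_left _ _
    set w : X := t • z + (1 - t) • x₀ with hwdef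
    have hww : ((w, w) : X × X) ∈ interior G := by
      have : t • ((z, z) : X × X) + (1 - t) • ((x₀, x₀) : X × X) = (w, w) := by
        simp [hwdef, Prod.ext_iff]
      rw [← this]
      exact hGconv.combo_interior_self_mem_interior hzz hp ht0 (by linarith) (by ring)
    have hwV : w ∈ V := by
      apply hballV
      have hsub : w - x₀ = t • (z - x₀) := by
        rw [hwdef]; rw [smul_sub, sub_smul, one_smul]; abel
      rw [Metric.mem_ball, dist_eq_norm, hsub, norm_smul, Real.norm_eq_abs, abs_of_pos ht0, ← hd]
      have htle : t ≤ rV / (2 * (d + 1)) := min_le_right _ _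
      have : t * d ≤ rV / (2 * (d + 1)) * d := mul_le_mul_of_nonneg_right htle hd0
      have hlt : rV / (2 * (d + 1)) * d < rV := by
        rw [div_mul_eq_mul_div, div_lt_iff₀ (by positivity)]
        nlinarith
      linarith
    obtain ⟨ε, hε, hballG⟩ := Metric.isOpen_iff.mp isOpen_interior (w, w) hww
    have hballG' : Metric.ball ((w, w) : X × X) ε ⊆ G := hballG.trans interior_subset
    have hwA : w ∈ A := (hballG' (Metric.mem_ball_self hε)).1
    have hTball : ∀ y ∈ Metric.ball w ε, y ∈ T w l₀ := by
      intro y hy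
      have : ((w, y) : X × X) ∈ Metric.ball ((w, w) : X × X) ε := by
        rw [← ball_prod_same]
        exact ⟨Metric.mem_ball_self hε, hy⟩
      exact (hballG' this).2
    -- finite net of the closed ball of radius ε/2
    have hKsub : Metric.closedBall w (ε/2) ⊆ T w l₀ := fun y hy =>
      hTball y (lt_of_le_of_lt (Metric.mem_closedBall.mp hy) (by linarith))
    have hKcomp : IsCompact (Metric.closedBall w (ε/2)) :=
      hAcomp.of_isClosed_subset Metric.isClosed_closedBall (hKsub.trans (hTA w hwA l₀))
    obtain ⟨N, hNsub, hNfin, hNcover⟩ :=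
      Metric.finite_approx_of_totallyBounded hKcomp.totallyBounded (ε/8) (by positivity)
    -- for each net point, lower semicontinuity gives nearby values for λ near l₀
    have hev_i : ∀ y ∈ N, ∀ᶠ lam in 𝓝 l₀, (T w lam ∩ Metric.ball y (ε/8)).Nonempty := by
      intro y hyN
      obtain ⟨U, hU, hUp⟩ := (hcont w hwA).2 y (hKsub (hNsub hyN)) (Metric.ball y (ε/8))
        Metric.isOpen_ball (Metric.mem_ball_self (by positivity))
      have hmap : Tendsto (fun lam : Λ => ((w, lam) : X × Λ)) (𝓝 l₀)
          (𝓝[A ×ˢ (univ : Set Λ)] (w, l₀)) := by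
        rw [tendsto_nhdsWithin_iff]
        constructor
        · exact ((continuous_const.prodMk continuous_id).tendsto l₀)
        · exact Eventually.of_forall fun lam => ⟨hwA, mem_univ _⟩
      filter_upwards [hmap hU] with lam hlam
      exact hUp _ hlam
    have hev_all := (Set.Finite.eventually_all hNfin).mpr hev_i
    filter_upwards [hev_all] with lam hlam
    have hval' := hval w hwA lam
    have hwfix : w ∈ T w lam := by
      apply mem_of_near_closedBall hval'.2.2 hval'.2.1 (show (0:ℝ) < ε/2 by positivity)
      intro y hy
      obtain ⟨i, hiN, hyi⟩ := Set.mem_iUnion₂.mp (hNcover hy)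
      obtain ⟨c, hcT, hci⟩ := hlam i hiN
      refine ⟨c, hcT, ?_⟩
      have : dist c y ≤ dist c i + dist i y := dist_triangle c i y
      have h2 : dist i y < ε/8 := by rw [dist_comm]; exact hyi
      have h3 : dist c i < ε/8 := hci
      calc dist c y ≤ dist c i + dist i y := dist_triangle c i y
      _ < ε/8 + ε/8 := by linarith
      _ = ε/2/2 := by ring
    exact ⟨w, ⟨hwA, hwfix⟩, hwV⟩
  · -- Case B: x₀ is the unique fixed point at l₀.
    push_neg at hS
    obtain ⟨U₀, hU₀, hU₀ne⟩ := hSne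
    have hKcomp : IsCompact (A \ V) := hAcomp.diff hV
    have hevK : ∀ᶠ lam in 𝓝 l₀, ∀ x ∈ A \ V, ¬(x ∈ A ∧ x ∈ T x lam) := by
      apply hKcomp.eventually_forall_of_forall_eventually
      intro x hxK
      have hxA : x ∈ A := hxK.1
      have hxfix : x ∉ T x l₀ := by
        intro hmem
        exact hxK.2 (hS x hxA hmem ▸ hx₀V)
      obtain ⟨hTne, hTcl, -⟩ := hval x hxA l₀
      set r : ℝ := Metric.infDist x (T x l₀) with hrdef
      have hr : 0 < r := by
        rcases lt_or_eq_of_le (Metric.infDist_nonneg : (0:ℝ) ≤ Metric.infDist x (T x l₀)) with h | h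
        · exact h
        · exact absurd ((hTcl.mem_iff_infDist_zero hTne).mpr h.symm) hxfix
      set W : Set X := {y | Metric.infDist y (T x l₀) < r/2} with hWdef
      have hWopen : IsOpen W := isOpen_lt (Metric.continuous_infDist_pt _) continuous_const
      have hWsub : T x l₀ ⊆ W := fun y hy => by
        simp only [hWdef, mem_setOf_eq, Metric.infDist_zero_of_mem hy]
        positivity
      obtain ⟨U, hU, hUp⟩ := (hcont x hxA).1 W hWopen hWsub
      obtain ⟨O, hOopen, hOmem, hOsub⟩ := mem_nhdsWithin.mp hU
      have hO' : {z : Λ × X | (z.2, z.1) ∈ O ∧ dist z.2 x < r/4} ∈ 𝓝 ((l₀, x) : Λ × X) := by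
        apply IsOpen.mem_nhds
        · exact ((hOopen.preimage (continuous_swap)).inter
            ((Metric.isOpen_ball).preimage continuous_snd))
        · exact ⟨hOmem, by rw [dist_self]; linarith⟩
      filter_upwards [hO'] with z hz
      rintro ⟨hz2A, hz2fix⟩
      have hzU : ((z.2, z.1) : X × Λ) ∈ U := hOsub ⟨hz.1, hz2A, mem_univ _⟩
      have hTsub := hUp _ hzU
      have h5 : Metric.infDist z.2 (T x l₀) < r/2 := hTsub hz2fix
      have h6 : Metric.infDist x (T x l₀) ≤ Metric.infDist z.2 (T x l₀) + dist x z.2 :=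
        Metric.infDist_le_infDist_add_dist
      have h7 : dist x z.2 < r/4 := by rw [dist_comm]; exact hz.2
      rw [← hrdef] at h6
      linarith
    filter_upwards [hevK, hU₀] with lam hlam hlamU₀
    obtain ⟨x', hx'⟩ := hU₀ne lam hlamU₀
    have hx'V : x' ∈ V := by
      by_contra hxn
      exact hlam x' ⟨hx'.1, hxn⟩ ⟨hx'.1, hx'.2⟩
    exact ⟨x', hx', hx'V⟩
end

section
/- Let Λ and X be normed vector spaces, A a nonempty compact convex subset of X, and T : A × Λ → 2^A a set-valued mapping; for λ ∈ Λ and ε ≥ 0 let E(λ, ε) = {x ∈ A : d(x, T(x, λ)) ≤ ε}, where d(x, B) = inf_{y ∈ B} ‖x − y‖. Let λ₀ ∈ Λ and ε₀ > 0. Assume: (i) T(·, λ₀) is convex (its graph is convex); (ii) T(·, λ₀) is upper semicontinuous at every point of A with nonempty closed values; (iii) for every x ∈ A, T(x, ·) is lower semicontinuous at λ₀. Then the approximate solution mapping E(·, ·) is lower semicontinuous at (λ₀, ε₀). -/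
open Filter Topology Set Pointwise

/-- Theorem 3.2: lower semicontinuity of the approximate solution mapping
`E(λ, ε) = {x ∈ A : d(x, T(x,λ)) ≤ ε}` at `(λ₀, ε₀)` with `ε₀ > 0`, where `A` is a
nonempty compact convex subset of a normed space, `T(·,λ₀)` has convex graph and is
u.s.c. on `A` with nonempty closed values, and `T(x,·)` is l.s.c. at `λ₀` for every
`x ∈ A`. -/
theorem stmt_6 {Λ X : Type*} [NormedAddCommGroup Λ] [NormedSpace ℝ Λ]
    [NormedAddCommGroup X] [NormedSpace ℝ X]
    (A : Set X) (hAne : A.Nonempty) (hAcomp : IsCompact A) (hAconv : Convex ℝ A)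
    (T : X → Λ → Set X) (hTA : ∀ x ∈ A, ∀ l : Λ, T x l ⊆ A)
    (l₀ : Λ) (ε₀ : ℝ) (hε₀ : 0 < ε₀)
    (hgraphconv : Convex ℝ (GraphOn A (fun x => T x l₀)))
    (husc : ∀ x ∈ A, UscWithinAt (fun y => T y l₀) A x ∧
      (T x l₀).Nonempty ∧ IsClosed (T x l₀))
    (hlsc : ∀ x ∈ A, LscAt (fun l : Λ => T x l) l₀) :
    LscAt (fun p : Λ × ℝ => {x ∈ A | Metric.infDist x (T x p.1) ≤ p.2}) (l₀, ε₀) := by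
  classical
  intro x hx V hV hxV
  obtain ⟨hxA, hxd⟩ := hx
  have hne : ∀ z ∈ A, (T z l₀).Nonempty := fun z hz => (husc z hz).2.1
  have hcl : ∀ z ∈ A, IsClosed (T z l₀) := fun z hz => (husc z hz).2.2
  choose f hf using hne
  set F : X → X := fun z => if h : z ∈ A then f z h else x with hF
  set seq : ℕ → X := fun n => F^[n] x with hseqdef
  have hseq0 : seq 0 = x := rfl
  have hseqS : ∀ n, seq (n + 1) = F (seq n) := by
    intro n; simp only [hseqdef, Function.iterate_succ_apply']
  have hseqA : ∀ n, seq n ∈ A := by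
    intro n
    induction n with
    | zero => exact hxA
    | succ n ih =>
      rw [hseqS]
      have : F (seq n) = f (seq n) ih := by simp only [hF, dif_pos ih]
      rw [this]
      exact hTA _ ih l₀ (hf _ ih)
  have hseqT : ∀ n, seq (n + 1) ∈ T (seq n) l₀ := by
    intro n
    rw [hseqS]
    have : F (seq n) = f (seq n) (hseqA n) := by simp only [hF, dif_pos (hseqA n)]
    rw [this]
    exact hf _ (hseqA n)
  -- choose N large
  obtain ⟨N, hN⟩ := exists_nat_gt (Metric.diam A / ε₀)
  have hdiam0 : (0:ℝ) ≤ Metric.diam A / ε₀ := div_nonneg Metric.diam_nonneg hε₀.le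
  have hN0 : (0:ℝ) < (N:ℝ) := lt_of_le_of_lt hdiam0 hN
  have hNne : (N:ℝ) ≠ 0 := ne_of_gt hN0
  -- the averaged graph point
  have hpts : ∀ i, ((seq i, seq (i+1)) : X × X) ∈ GraphOn A (fun z => T z l₀) :=
    fun i => ⟨hseqA i, hseqT i⟩
  set s : X := (N:ℝ)⁻¹ • ∑ i ∈ Finset.range N, seq i with hs
  set s' : X := (N:ℝ)⁻¹ • ∑ i ∈ Finset.range N, seq (i+1) with hs'
  have hsum : (∑ i ∈ Finset.range N, ((N:ℝ))⁻¹ • ((seq i, seq (i+1)) : X × X))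
      ∈ GraphOn A (fun z => T z l₀) := by
    apply hgraphconv.sum_mem
    · intro i _; positivity
    · rw [Finset.sum_const, Finset.card_range, nsmul_eq_mul, mul_inv_cancel₀ hNne]
    · intro i _; exact hpts i
  have hpair : (∑ i ∈ Finset.range N, ((N:ℝ))⁻¹ • ((seq i, seq (i+1)) : X × X)) = (s, s') := by
    rw [hs, hs', Finset.smul_sum, Finset.smul_sum]
    rw [Prod.ext_iff]
    constructor
    · simp [Prod.fst_sum]
    · simp [Prod.snd_sum]
  rw [hpair] at hsum
  obtain ⟨hsA, hs'T⟩ := hsum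
  have hss' : dist s s' < ε₀ := by
    have htel : s - s' = (N:ℝ)⁻¹ • (seq 0 - seq N) := by
      rw [hs, hs', ← smul_sub, ← Finset.sum_sub_distrib]
      congr 1
      exact Finset.sum_range_sub' seq N
    have h1 : dist s s' = (N:ℝ)⁻¹ * ‖x - seq N‖ := by
      rw [dist_eq_norm, htel, norm_smul, Real.norm_eq_abs, abs_of_pos (by positivity), hseq0]
    have h2 : ‖x - seq N‖ ≤ Metric.diam A := by
      rw [← dist_eq_norm]
      exact Metric.dist_le_diam_of_mem hAcomp.isBounded hxA (hseqA N)
    rw [h1]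
    calc (N:ℝ)⁻¹ * ‖x - seq N‖ ≤ (N:ℝ)⁻¹ * Metric.diam A := by
          apply mul_le_mul_of_nonneg_left h2 (by positivity)
      _ < ε₀ := by
          rw [inv_mul_lt_iff₀ hN0]
          rw [div_lt_iff₀ hε₀] at hN
          linarith
  -- nearest point y in T x l₀
  have hcx : IsCompact (T x l₀) := hAcomp.of_isClosed_subset (hcl x hxA) (hTA x hxA l₀)
  obtain ⟨y, hyT, hyd⟩ := hcx.exists_infDist_eq_dist ((husc x hxA).2.1) x
  have hxy : dist x y ≤ ε₀ := hyd ▸ hxd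
  -- pick t small
  have hcont : Continuous fun t : ℝ => (1 - t) • x + t • s := by continuity
  have h0 : ((1:ℝ) - 0) • x + (0:ℝ) • s = x := by simp
  have hev : ∀ᶠ t in 𝓝 (0:ℝ), (1 - t) • x + t • s ∈ V := by
    apply (hcont.continuousAt (x := (0:ℝ))).eventually_mem
    rw [h0]
    exact hV.mem_nhds hxV
  have hev1 : ∀ᶠ t in 𝓝 (0:ℝ), t < 1 := eventually_lt_nhds zero_lt_one
  obtain ⟨t, ⟨htV, ht1⟩, ht0⟩ :=
    (((hev.and hev1).filter_mono nhdsWithin_le_nhds).and self_mem_nhdsWithin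
      : ∀ᶠ t in 𝓝[>] (0:ℝ), ((1 - t) • x + t • s ∈ V ∧ t < 1) ∧ t ∈ Ioi 0).exists
  rw [mem_Ioi] at ht0
  set x' : X := (1 - t) • x + t • s with hx'
  have hx'A : x' ∈ A := hAconv hxA hsA (by linarith) ht0.le (by ring)
  set w : X := (1 - t) • y + t • s' with hw
  have hwT : w ∈ T x' l₀ := by
    have hcomb : (1 - t) • ((x, y) : X × X) + t • ((s, s') : X × X)
        ∈ GraphOn A (fun z => T z l₀) :=
      hgraphconv ⟨hxA, hyT⟩ ⟨hsA, hs'T⟩ (by linarith) ht0.le (by ring)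
    have heq : (1 - t) • ((x, y) : X × X) + t • ((s, s') : X × X) = (x', w) := by
      rw [hx', hw, Prod.smul_mk, Prod.smul_mk, Prod.mk_add_mk]
    rw [heq] at hcomb
    exact hcomb.2
  have hd' : Metric.infDist x' (T x' l₀) < ε₀ := by
    have hle : Metric.infDist x' (T x' l₀) ≤ dist x' w := Metric.infDist_le_dist_of_mem hwT
    have hdiff : x' - w = (1 - t) • (x - y) + t • (s - s') := by
      rw [hx', hw]; module
    have hnorm : dist x' w ≤ (1 - t) * dist x y + t * dist s s' := by
      rw [dist_eq_norm, hdiff, dist_eq_norm, dist_eq_norm]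
      calc ‖(1 - t) • (x - y) + t • (s - s')‖
          ≤ ‖(1 - t) • (x - y)‖ + ‖t • (s - s')‖ := norm_add_le _ _
        _ = (1 - t) * ‖x - y‖ + t * ‖s - s'‖ := by
            rw [norm_smul, norm_smul, Real.norm_eq_abs, Real.norm_eq_abs,
              abs_of_nonneg (by linarith), abs_of_nonneg ht0.le]
    have h1 : (1 - t) * dist x y ≤ (1 - t) * ε₀ :=
      mul_le_mul_of_nonneg_left hxy (by linarith)
    have h2 : t * dist s s' < t * ε₀ := mul_lt_mul_of_pos_left hss' ht0
    have h3 : (1 - t) * ε₀ + t * ε₀ = ε₀ := by ring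
    linarith
  -- step 2 : l.s.c. argument at x'
  have hx'c : IsCompact (T x' l₀) := hAcomp.of_isClosed_subset (hcl x' hx'A) (hTA x' hx'A l₀)
  obtain ⟨y', hy'T, hy'd⟩ := hx'c.exists_infDist_eq_dist ((husc x' hx'A).2.1) x'
  set d' : ℝ := Metric.infDist x' (T x' l₀) with hd'def
  set r : ℝ := (ε₀ - d') / 2 with hr
  have hr0 : 0 < r := by rw [hr]; linarith
  obtain ⟨U₁, hU₁, hU₁'⟩ := hlsc x' hx'A y' hy'T (Metric.ball y' r)
    Metric.isOpen_ball (Metric.mem_ball_self hr0)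
  refine ⟨U₁ ×ˢ Set.Ioi (d' + r), prod_mem_nhds hU₁ (Ioi_mem_nhds (by rw [hr]; linarith)), ?_⟩
  rintro ⟨l, ε⟩ ⟨hl, hε⟩
  obtain ⟨z, hzT, hzb⟩ := hU₁' l hl
  refine ⟨x', ⟨hx'A, ?_⟩, htV⟩
  have : Metric.infDist x' (T x' l) ≤ dist x' z := Metric.infDist_le_dist_of_mem hzT
  have htri : dist x' z ≤ dist x' y' + dist y' z := dist_triangle x' y' z
  have hzb' : dist y' z < r := by rw [dist_comm]; exact Metric.mem_ball.mp hzb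
  rw [mem_Ioi] at hε
  have : Metric.infDist x' (T x' l) < d' + r := by
    calc Metric.infDist x' (T x' l) ≤ dist x' z := this
      _ ≤ dist x' y' + dist y' z := htri
      _ < d' + r := by rw [← hy'd] at *; linarith
  linarith
end

section
/- Let X be a normed vector space, A a nonempty compact convex subset of X, and T₀ : A → 2^A a set-valued mapping that is convex (its graph is convex) and upper semicontinuous at every point of A with nonempty closed values. Define Q : ℝ₊ → 2^A by Q(ε) = {x ∈ A : d(x, T₀(x)) ≤ ε}, where d(x, B) = inf_{y ∈ B} ‖x − y‖. Then Q is lower semicontinuous at every ε₀ > 0. -/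
open Filter Topology Set Pointwise

lemma approx_fixed {X : Type*} [NormedAddCommGroup X] [NormedSpace ℝ X]
    (A : Set X) (hAne : A.Nonempty) (hAb : Bornology.IsBounded A)
    (T₀ : X → Set X) (hTA : ∀ x ∈ A, T₀ x ⊆ A)
    (hgraphconv : Convex ℝ (GraphOn A T₀))
    (hne : ∀ x ∈ A, (T₀ x).Nonempty) :
    ∀ δ : ℝ, 0 < δ → ∃ p : X × X, p ∈ GraphOn A T₀ ∧ dist p.1 p.2 < δ := by
  intro δ hδ
  classical
  obtain ⟨a₀, ha₀⟩ := hAne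
  have step : ∀ a ∈ A, ∃ b, b ∈ T₀ a ∧ b ∈ A := fun a ha =>
    let ⟨b, hb⟩ := hne a ha; ⟨b, hb, hTA a ha hb⟩
  choose! g hg1 hg2 using step
  set x : ℕ → X := fun n => g^[n] a₀ with hxdef
  have hxA : ∀ n, x n ∈ A := by
    intro n; induction n with
    | zero => exact ha₀
    | succ n ih => simpa [hxdef, Function.iterate_succ_apply'] using hg2 _ ih
  have hxT : ∀ n, x (n+1) ∈ T₀ (x n) := by
    intro n
    simpa [hxdef, Function.iterate_succ_apply'] using hg1 _ (hxA n)
  obtain ⟨n, hn⟩ := exists_nat_gt (Metric.diam A / δ)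
  have hdiam_nonneg : 0 ≤ Metric.diam A := Metric.diam_nonneg
  have hn0 : 0 < (n : ℝ) := lt_of_le_of_lt (div_nonneg hdiam_nonneg hδ.le) hn
  have hnn : 0 < n := by exact_mod_cast hn0
  set p : X × X := ∑ i ∈ Finset.range n, ((n : ℝ)⁻¹) • (x i, x (i+1)) with hpdef
  have hpG : p ∈ GraphOn A T₀ := by
    apply hgraphconv.sum_mem
    · intro i _; positivity
    · rw [Finset.sum_const, Finset.card_range, nsmul_eq_mul]
      field_simp
    · intro i _; exact ⟨hxA i, hxT i⟩
  have h1 : p.1 = ∑ i ∈ Finset.range n, ((n : ℝ)⁻¹) • x i := by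
    simp [hpdef, Prod.fst_sum, Prod.snd_sum]
  have h2 : p.2 = ∑ i ∈ Finset.range n, ((n : ℝ)⁻¹) • x (i+1) := by
    simp [hpdef, Prod.fst_sum, Prod.snd_sum]
  have hsub : p.1 - p.2 = ((n : ℝ)⁻¹) • (x 0 - x n) := by
    rw [h1, h2, ← Finset.sum_sub_distrib]
    rw [← Finset.sum_range_sub' x]
    rw [Finset.smul_sum]
    exact Finset.sum_congr rfl fun i _ => (smul_sub _ _ _).symm
  refine ⟨p, hpG, ?_⟩
  rw [dist_eq_norm, hsub, norm_smul, Real.norm_eq_abs, abs_inv, abs_of_pos hn0]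
  have hbd : ‖x 0 - x n‖ ≤ Metric.diam A := by
    rw [← dist_eq_norm]
    exact Metric.dist_le_diam_of_mem hAb (hxA 0) (hxA n)
  calc (n : ℝ)⁻¹ * ‖x 0 - x n‖ ≤ (n : ℝ)⁻¹ * Metric.diam A := by
        apply mul_le_mul_of_nonneg_left hbd (by positivity)
    _ < δ := by
        rw [inv_mul_lt_iff₀ hn0]
        calc Metric.diam A = (Metric.diam A / δ) * δ := by field_simp
          _ < n * δ := by exact mul_lt_mul_of_pos_right hn hδ

/-- The key claim in the proof of Theorem 3.2: if `A` is a nonempty compact convex subset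
of a normed space and `T₀ : A → 2^A` has convex graph and is u.s.c. at every point of `A`
with nonempty closed values, then `Q(ε) = {x ∈ A : d(x, T₀(x)) ≤ ε}` is l.s.c. at every
`ε₀ > 0`. -/
theorem stmt_7 {X : Type*} [NormedAddCommGroup X] [NormedSpace ℝ X]
    (A : Set X) (hAne : A.Nonempty) (hAcomp : IsCompact A) (hAconv : Convex ℝ A)
    (T₀ : X → Set X) (hTA : ∀ x ∈ A, T₀ x ⊆ A)
    (hgraphconv : Convex ℝ (GraphOn A T₀))
    (husc : ∀ x ∈ A, UscWithinAt T₀ A x ∧ (T₀ x).Nonempty ∧ IsClosed (T₀ x)) :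
    ∀ ε₀ : ℝ, 0 < ε₀ →
      LscAt (fun ε : ℝ => {x ∈ A | Metric.infDist x (T₀ x) ≤ ε}) ε₀ := by
  intro ε₀ hε₀ x hx V hV hxV
  obtain ⟨hxA, hxd⟩ := hx
  obtain ⟨husc_x, hT0ne, hT0cl⟩ := husc x hxA
  have hcompTx : IsCompact (T₀ x) := hAcomp.of_isClosed_subset hT0cl (hTA x hxA)
  obtain ⟨y, hyT, hyd⟩ := hcompTx.exists_infDist_eq_dist hT0ne x
  have hdxy : dist x y ≤ ε₀ := hyd ▸ hxd
  obtain ⟨q, hqG, hqd⟩ := approx_fixed A hAne hAcomp.isBounded T₀ hTA hgraphconv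
    (fun a ha => (husc a ha).2.1) (ε₀ / 2) (by positivity)
  obtain ⟨x', y'⟩ := q
  obtain ⟨hx'A, hy'T⟩ := hqG
  simp only at hqd hx'A hy'T
  -- choose a small parameter t
  obtain ⟨r, hr, hball⟩ := Metric.isOpen_iff.mp hV x hxV
  set t : ℝ := min 1 (r / (2 * (dist x' x + 1))) with htdef
  have hd1 : (0:ℝ) < dist x' x + 1 := by positivity
  have ht0 : 0 < t := lt_min one_pos (by positivity)
  have ht1 : t ≤ 1 := min_le_left _ _
  set xt : X := (1 - t) • x + t • x' with hxt
  set yt : X := (1 - t) • y + t • y' with hyt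
  have hG : (xt, yt) ∈ GraphOn A T₀ := by
    have := hgraphconv (x := (x, y)) (y := (x', y')) ⟨hxA, hyT⟩ ⟨hx'A, hy'T⟩
      (by linarith : (0:ℝ) ≤ 1 - t) ht0.le (by ring)
    simpa [Prod.smul_mk, Prod.mk_add_mk] using this
  have hxtA : xt ∈ A := hG.1
  have hytT : yt ∈ T₀ xt := hG.2
  -- xt ∈ V
  have hxtV : xt ∈ V := by
    apply hball
    have heq : xt - x = t • (x' - x) := by
      rw [hxt, sub_smul, one_smul, smul_sub]; abel
    have : dist xt x = t * dist x' x := by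
      rw [dist_eq_norm, heq, norm_smul, Real.norm_eq_abs, abs_of_pos ht0, dist_eq_norm]
    rw [Metric.mem_ball, this]
    have h2 : t ≤ r / (2 * (dist x' x + 1)) := min_le_right _ _
    have : t * dist x' x ≤ (r / (2 * (dist x' x + 1))) * (dist x' x + 1) :=
      mul_le_mul h2 (by linarith [dist_nonneg (x := x') (y := x)]) dist_nonneg
        (by positivity)
    calc t * dist x' x ≤ r / (2 * (dist x' x + 1)) * (dist x' x + 1) := this
      _ = r / 2 := by field_simp
      _ < r := by linarith
  -- distance estimate
  have hdist : dist xt yt ≤ ε₀ - t * (ε₀ / 2) := by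
    have heq : xt - yt = (1 - t) • (x - y) + t • (x' - y') := by
      rw [hxt, hyt, smul_sub, smul_sub]; abel
    have hle : dist xt yt ≤ (1 - t) * dist x y + t * dist x' y' := by
      rw [dist_eq_norm, heq, dist_eq_norm, dist_eq_norm]
      calc ‖(1 - t) • (x - y) + t • (x' - y')‖
          ≤ ‖(1 - t) • (x - y)‖ + ‖t • (x' - y')‖ := norm_add_le _ _
        _ = (1 - t) * ‖x - y‖ + t * ‖x' - y'‖ := by
            rw [norm_smul, norm_smul, Real.norm_eq_abs, Real.norm_eq_abs,
              abs_of_nonneg (by linarith : (0:ℝ) ≤ 1 - t), abs_of_pos ht0]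
    have h1 : (1 - t) * dist x y ≤ (1 - t) * ε₀ :=
      mul_le_mul_of_nonneg_left hdxy (by linarith)
    have h2 : t * dist x' y' ≤ t * (ε₀ / 2) :=
      mul_le_mul_of_nonneg_left hqd.le ht0.le
    nlinarith
  have hinf : Metric.infDist xt (T₀ xt) ≤ ε₀ - t * (ε₀ / 2) :=
    le_trans (Metric.infDist_le_dist_of_mem hytT) hdist
  refine ⟨Set.Ioi (ε₀ - t * (ε₀ / 2)), ?_, ?_⟩
  · exact Ioi_mem_nhds (by nlinarith)
  · intro ε hε
    exact ⟨xt, ⟨hxtA, le_trans hinf (le_of_lt hε)⟩, hxtV⟩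
end

section
/- Let K₁ ⊆ ℝ^N and let K₂ ⊆ ℝ^N be nonempty compact and convex. Let T : K₂ × K₁ → 2^{K₂} be a set-valued mapping such that T(·, x) is rotund for every x ∈ K₁ and T is continuous (both u.s.c. and l.s.c.) on K₂ × K₁ with nonempty closed values. Then the Stackelberg equilibrium response mapping R'_{SE} : K₁ → 2^{K₂}, R'_{SE}(x) = {y ∈ K₂ : y ∈ T(y, x)}, has nonempty values and is lower semicontinuous at every point of K₁. -/
open Filter Topology Set Pointwise

/-- Cesàro-mean fixed point lemma: a convex compact graph `G ⊆ E × E` whose slices over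
`C` are nonempty and whose second components lie in `C` contains a diagonal point. -/
theorem cesaro_fix {E : Type*} [NormedAddCommGroup E] [NormedSpace ℝ E]
    {G : Set (E × E)} {C : Set E} (hconv : Convex ℝ G) (hcomp : IsCompact G)
    (hCne : C.Nonempty) (hslice : ∀ a ∈ C, ∃ b, (a, b) ∈ G)
    (hsnd : ∀ p ∈ G, p.2 ∈ C) : ∃ y, (y, y) ∈ G := by
  obtain ⟨a₀, ha₀⟩ := hCne
  classical
  set F : E → E := fun a => if h : a ∈ C then (hslice a h).choose else a₀ with hFdef
  have hF : ∀ a ∈ C, (a, F a) ∈ G := by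
    intro a ha
    simp only [hFdef, dif_pos ha]
    exact (hslice a ha).choose_spec
  have hFC : ∀ a ∈ C, F a ∈ C := fun a ha => hsnd _ (hF a ha)
  set f : ℕ → E := fun n => F^[n] a₀ with hfdef
  have hfC : ∀ n, f n ∈ C := by
    intro n; induction n with
    | zero => exact ha₀
    | succ n ih => simp only [hfdef, Function.iterate_succ_apply']; exact hFC _ ih
  have hfG : ∀ n, (f n, f (n + 1)) ∈ G := by
    intro n
    have : f (n + 1) = F (f n) := by simp only [hfdef]; exact Function.iterate_succ_apply' F n a₀
    rw [this]; exact hF _ (hfC n)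
  -- bound
  obtain ⟨M, hM⟩ := hcomp.isBounded.exists_norm_le
  have hfM : ∀ n, ‖f n‖ ≤ M := fun n =>
    le_trans (norm_fst_le (f n, f (n + 1))) (hM _ (hfG n))
  -- mean points
  have hmean : ∀ n : ℕ, 0 < n →
      ((n : ℝ)⁻¹ • ∑ i ∈ Finset.range n, f i,
       (n : ℝ)⁻¹ • ∑ i ∈ Finset.range n, f (i + 1)) ∈ G := by
    intro n hn
    have hne : (n : ℝ) ≠ 0 := Nat.cast_ne_zero.mpr hn.ne'
    have := hconv.sum_mem (t := Finset.range n) (w := fun _ => (n : ℝ)⁻¹)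
      (z := fun i => (f i, f (i + 1)))
      (fun i _ => by positivity)
      (by simp [Finset.sum_const, hne])
      (fun i _ => hfG i)
    convert this using 1
    rw [Prod.ext_iff]
    constructor
    · simp [Prod.fst_sum, Finset.smul_sum]
    · simp [Prod.snd_sum, Finset.smul_sum]
  -- minimizer of gap
  have hGne : G.Nonempty := ⟨_, hF a₀ ha₀⟩
  obtain ⟨p₀, hp₀G, hp₀min⟩ := hcomp.exists_isMinOn hGne
    (Continuous.continuousOn (by continuity : Continuous fun p : E × E => ‖p.2 - p.1‖))
  have hgap : ∀ n : ℕ, 0 < n → ‖p₀.2 - p₀.1‖ ≤ (2 * M) / n := by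
    intro n hn
    have hmem := hmean n hn
    have h1 := hp₀min hmem
    have hsum : (∑ i ∈ Finset.range n, f (i + 1)) - ∑ i ∈ Finset.range n, f i
        = f n - f 0 := by
      have h2 := Finset.sum_range_succ' f n
      have h3 := Finset.sum_range_succ f n
      have : (∑ i ∈ Finset.range n, f (i + 1)) + f 0 = (∑ i ∈ Finset.range n, f i) + f n := by
        rw [← h2, ← h3]
      linear_combination (norm := abel) this
    calc ‖p₀.2 - p₀.1‖ ≤ ‖(n:ℝ)⁻¹ • ∑ i ∈ Finset.range n, f (i+1) -
          (n:ℝ)⁻¹ • ∑ i ∈ Finset.range n, f i‖ := h1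
      _ = (n:ℝ)⁻¹ * ‖f n - f 0‖ := by
          rw [← smul_sub, hsum, norm_smul]
          simp [abs_of_nonneg (by positivity : (0:ℝ) ≤ (n:ℝ)⁻¹)]
      _ ≤ (n:ℝ)⁻¹ * (2 * M) := by
          gcongr
          calc ‖f n - f 0‖ ≤ ‖f n‖ + ‖f 0‖ := norm_sub_le _ _
            _ ≤ M + M := add_le_add (hfM n) (hfM 0)
            _ = 2 * M := by ring
      _ = (2 * M) / n := by ring
  have hzero : ‖p₀.2 - p₀.1‖ = 0 := by
    have htend : Tendsto (fun n : ℕ => (2 * M) / (n : ℝ)) atTop (𝓝 0) :=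
      tendsto_const_div_atTop_nhds_zero_nat (2 * M)
    have hle : ‖p₀.2 - p₀.1‖ ≤ 0 := by
      refine ge_of_tendsto htend ?_
      filter_upwards [eventually_gt_atTop 0] with n hn using hgap n hn
    exact le_antisymm hle (norm_nonneg _)
  have : p₀.2 = p₀.1 := by
    have := norm_sub_eq_zero_iff.mp hzero; exact this
  exact ⟨p₀.1, by rw [show (p₀.1, p₀.1) = p₀ from Prod.ext rfl this.symm]; exact hp₀G⟩

/-- Limits of points of the graph stay in the graph, given usc at the limit point and a
closed value there. -/
theorem limit_mem_graph {X : Type*} [MetricSpace X] {s : Set (X × X)}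
    {T : X → X → Set X} {y x : X}
    (husc : UscWithinAt (fun p : X × X => T p.1 p.2) s (y, x))
    (hcl : IsClosed (T y x))
    {p : ℕ → X × X} (hps : ∀ n, p n ∈ s) (hp : Tendsto p atTop (𝓝 (y, x)))
    {z : ℕ → X} (hz : ∀ n, z n ∈ T (p n).1 (p n).2) {w : X}
    (hw : Tendsto z atTop (𝓝 w)) : w ∈ T y x := by
  by_contra hwn
  obtain ⟨r, hr, hball⟩ := Metric.isOpen_iff.mp hcl.isOpen_compl w hwn
  have hsubV : T y x ⊆ (Metric.closedBall w (r / 2))ᶜ := by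
    intro v hv hvb
    exact hball (Metric.mem_ball.mpr (lt_of_le_of_lt (Metric.mem_closedBall.mp hvb)
      (by linarith))) hv
  obtain ⟨U, hU, hUsub⟩ := husc _ (Metric.isClosed_closedBall (x := w) (ε := r/2)).isOpen_compl hsubV
  obtain ⟨O, hOopen, hOmem, hOsub⟩ := mem_nhdsWithin.mp hU
  have hev1 : ∀ᶠ n in atTop, p n ∈ O := hp (hOopen.mem_nhds hOmem)
  have hev2 : ∀ᶠ n in atTop, dist (z n) w < r / 2 :=
    hw (Metric.ball_mem_nhds w (by linarith))
  obtain ⟨n, h1, h2⟩ := (hev1.and hev2).exists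
  have : z n ∈ (Metric.closedBall w (r / 2))ᶜ :=
    hUsub _ (hOsub ⟨h1, hps n⟩) (hz n)
  exact this (Metric.mem_closedBall.mpr h2.le)

/-- Nonemptiness and lower semicontinuity (on `K₁`) of the Stackelberg equilibrium
response mapping `R'_SE(x) = {y ∈ K₂ : y ∈ T(y, x)}`, where `K₂ ⊆ ℝ^N` is nonempty
compact convex, `T(·, x)` is rotund for every `x ∈ K₁`, and `T` is continuous on
`K₂ × K₁` with nonempty closed values. -/
theorem stmt_10 {N : ℕ}
    (K₁ K₂ : Set (EuclideanSpace ℝ (Fin N)))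
    (hK₂ne : K₂.Nonempty) (hK₂comp : IsCompact K₂) (hK₂conv : Convex ℝ K₂)
    (T : EuclideanSpace ℝ (Fin N) → EuclideanSpace ℝ (Fin N) →
      Set (EuclideanSpace ℝ (Fin N)))
    (hTK : ∀ y ∈ K₂, ∀ x ∈ K₁, T y x ⊆ K₂)
    (hrot : ∀ x ∈ K₁, RotundOn K₂ (fun y => T y x))
    (hcont : ∀ y ∈ K₂, ∀ x ∈ K₁,
      UscWithinAt (fun p : EuclideanSpace ℝ (Fin N) × EuclideanSpace ℝ (Fin N) =>
        T p.1 p.2) (K₂ ×ˢ K₁) (y, x) ∧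
      LscWithinAt (fun p : EuclideanSpace ℝ (Fin N) × EuclideanSpace ℝ (Fin N) =>
        T p.1 p.2) (K₂ ×ˢ K₁) (y, x))
    (hval : ∀ y ∈ K₂, ∀ x ∈ K₁, (T y x).Nonempty ∧ IsClosed (T y x)) :
    ∀ x ∈ K₁, {y | y ∈ K₂ ∧ y ∈ T y x}.Nonempty ∧
      LscWithinAt (fun x' => {y | y ∈ K₂ ∧ y ∈ T y x'}) K₁ x := by
  -- Closedness of the graph of `T(·, x')` for each fixed `x' ∈ K₁`.
  have graph_closed : ∀ x' ∈ K₁, IsClosed (GraphOn K₂ (fun y => T y x')) := by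
    intro x' hx'
    apply IsSeqClosed.isClosed
    intro q p hq hlim
    have hfst : Tendsto (fun n => (q n).1) atTop (𝓝 p.1) :=
      (continuous_fst.tendsto p).comp hlim
    have hsnd : Tendsto (fun n => (q n).2) atTop (𝓝 p.2) :=
      (continuous_snd.tendsto p).comp hlim
    have h1 : p.1 ∈ K₂ := hK₂comp.isClosed.isSeqClosed (fun n => (hq n).1) hfst
    refine ⟨h1, ?_⟩
    exact limit_mem_graph (s := K₂ ×ˢ K₁) (hcont p.1 h1 x' hx').1 (hval p.1 h1 x' hx').2
      (p := fun n => ((q n).1, x')) (fun n => ⟨(hq n).1, hx'⟩)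
      (hfst.prodMk_nhds tendsto_const_nhds)
      (fun n => (hq n).2) hsnd
  -- Nonemptiness of the fixed-point set for each `x' ∈ K₁`.
  have hne : ∀ x' ∈ K₁, {y | y ∈ K₂ ∧ y ∈ T y x'}.Nonempty := by
    intro x' hx'
    have hGsub : GraphOn K₂ (fun y => T y x') ⊆ K₂ ×ˢ K₂ :=
      fun p hp => ⟨hp.1, hTK _ hp.1 _ hx' hp.2⟩
    obtain ⟨y, hy⟩ := cesaro_fix (hrot x' hx').1
      (IsCompact.of_isClosed_subset (hK₂comp.prod hK₂comp) (graph_closed x' hx') hGsub)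
      hK₂ne (fun a ha => (hval a ha x' hx').1.imp (fun b hb => ⟨ha, hb⟩))
      (fun p hp => hTK _ hp.1 _ hx' hp.2)
    exact ⟨y, hy.1, hy.2⟩
  intro x hx
  refine ⟨hne x hx, ?_⟩
  intro y hy V hV hyV
  by_cases hsing : ∀ yhat ∈ {y' | y' ∈ K₂ ∧ y' ∈ T y' x}, yhat = y
  · -- singleton fixed-point set: use compactness & the closed graph
    by_contra hcon
    push_neg at hcon
    have hUn : ∀ n : ℕ, Metric.ball x (1 / ((n : ℝ) + 1)) ∩ K₁ ∈ 𝓝[K₁] x := fun n =>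
      inter_mem (nhdsWithin_le_nhds (Metric.ball_mem_nhds x (by positivity)))
        self_mem_nhdsWithin
    choose u hu hblank using fun n => hcon _ (hUn n)
    have huK : ∀ n, u n ∈ K₁ := fun n => (hu n).2
    have hulim : Tendsto u atTop (𝓝 x) := by
      rw [tendsto_iff_dist_tendsto_zero]
      exact squeeze_zero (fun n => dist_nonneg)
        (fun n => (Metric.mem_ball.mp (hu n).1).le)
        tendsto_one_div_add_atTop_nhds_zero_nat
    choose yy hyy using fun n => hne (u n) (huK n)
    obtain ⟨yhat, hyhatK, φ, hφmono, hφlim⟩ := hK₂comp.tendsto_subseq (fun n => (hyy n).1)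
    have hyhatT : yhat ∈ T yhat x :=
      limit_mem_graph (s := K₂ ×ˢ K₁) (hcont yhat hyhatK x hx).1 (hval yhat hyhatK x hx).2
        (p := fun k => (yy (φ k), u (φ k))) (fun k => ⟨(hyy _).1, huK _⟩)
        (hφlim.prodMk_nhds (hulim.comp hφmono.tendsto_atTop))
        (fun k => (hyy (φ k)).2) hφlim
    have hyhaty : yhat = y := hsing yhat ⟨hyhatK, hyhatT⟩
    rw [hyhaty] at hφlim
    obtain ⟨k, hk⟩ := (hφlim.eventually_mem (hV.mem_nhds hyV)).exists
    have hmem2 : yy (φ k) ∈ {y_ | y_ ∈ K₂ ∧ y_ ∈ T y_ (u (φ k))} ∩ V := ⟨hyy _, hk⟩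
    rw [hblank (φ k)] at hmem2
    exact hmem2
  · -- there is a second fixed point: use rotundity
    push_neg at hsing
    obtain ⟨yhat, ⟨hyhatK, hyhatT⟩, hyhatne⟩ := hsing
    obtain ⟨δ, hδ, hδV⟩ := Metric.isOpen_iff.mp hV y hyV
    set d := ‖yhat - y‖ with hd
    have hd0 : 0 < d := by rw [hd]; exact norm_sub_pos_iff.mpr hyhatne
    set t := min (δ / (2 * d)) 1 with ht
    have ht0 : 0 < t := lt_min (by positivity) one_pos
    have ht1 : t ≤ 1 := min_le_right _ _
    set y' := (1 - t) • y + t • yhat with hy'def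
    have hGx := (hrot x hx).1
    have hclosed := graph_closed x hx
    have hy'G : (y', y') ∈ GraphOn K₂ (fun y => T y x) := by
      have h := hGx (x := ((y : EuclideanSpace ℝ (Fin N)), y)) (y := (yhat, yhat))
        ⟨hy.1, hy.2⟩ ⟨hyhatK, hyhatT⟩ (sub_nonneg.mpr ht1) ht0.le (by ring)
      simpa [Prod.smul_mk, Prod.mk_add_mk, ← hy'def] using h
    have hy'sub : y' - y = t • (yhat - y) := by rw [hy'def]; module
    have hy'ney : y' ≠ y := by
      intro h
      have : t • (yhat - y) = 0 := by rw [← hy'sub, h, sub_self]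
      exact (smul_ne_zero ht0.ne' (sub_ne_zero.mpr hyhatne)) this
    have hy'dist : ‖y' - y‖ ≤ δ / 2 := by
      rw [hy'sub, norm_smul, Real.norm_eq_abs, abs_of_pos ht0, ← hd]
      calc t * d ≤ (δ / (2 * d)) * d := by gcongr; exact min_le_left _ _
        _ = δ / 2 := by field_simp
    obtain ⟨l, ⟨hl0, hl1⟩, hlmem⟩ := (hrot x hx).2 ((y : EuclideanSpace ℝ (Fin N)), y)
      ⟨hy.1, hy.2⟩ (y', y') hy'G (by simpa using hy'ney.symm) (by simpa using hy'ney.symm)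
    set z := l • y + (1 - l) • y' with hzdef
    have hzpair : l • ((y : EuclideanSpace ℝ (Fin N)), y) + (1 - l) • (y', y') = (z, z) := rfl
    have hzG : (z, z) ∈ GraphOn K₂ (fun y => T y x) := by
      have h := hGx (x := ((y : EuclideanSpace ℝ (Fin N)), y)) (y := (y', y'))
        ⟨hy.1, hy.2⟩ hy'G (a := l) (b := 1 - l) hl0.le (by linarith) (by ring)
      simpa [hzpair] using h
    have hzint : (z, z) ∈ interior (GraphOn K₂ (fun y => T y x)) := by
      rw [hzpair] at hlmem
      by_contra h
      exact hlmem (by rw [hclosed.frontier_eq]; exact ⟨hzG, h⟩)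
    obtain ⟨ε₀, hε₀, hball₀⟩ := Metric.mem_nhds_iff.mp (mem_interior_iff_mem_nhds.mp hzint)
    have hzy : ‖z - y‖ ≤ δ / 2 := by
      have hzsub : z - y = (1 - l) • (y' - y) := by rw [hzdef]; module
      rw [hzsub, norm_smul, Real.norm_eq_abs, abs_of_nonneg (by linarith)]
      nlinarith [norm_nonneg (y' - y), hy'dist]
    set ε := min (ε₀ / 2) (δ / 4) with hε
    have hεpos : 0 < ε := lt_min (by linarith) (by linarith)
    have hεV : Metric.closedBall z ε ⊆ V := by
      intro w hw
      apply hδV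
      rw [Metric.mem_ball]
      have h1 : dist w z ≤ ε := Metric.mem_closedBall.mp hw
      have h2 : dist z y ≤ δ / 2 := by rw [dist_eq_norm]; exact hzy
      have h3 : ε ≤ δ / 4 := min_le_right _ _
      calc dist w y ≤ dist w z + dist z y := dist_triangle _ _ _
        _ ≤ δ / 4 + δ / 2 := by linarith
        _ < δ := by linarith
    have hzT : ∀ a ∈ Metric.closedBall z ε, a ∈ K₂ ∧ z ∈ T a x := by
      intro a ha
      have hmem : (a, z) ∈ Metric.ball (z, z) ε₀ := by
        rw [Metric.mem_ball, Prod.dist_eq]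
        apply max_lt
        · exact lt_of_le_of_lt (Metric.mem_closedBall.mp ha)
            (lt_of_le_of_lt (min_le_left _ _) (by linarith))
        · simpa using hε₀
      exact hball₀ hmem
    set C := K₂ ∩ Metric.closedBall z ε with hC
    have hCcomp : IsCompact C := hK₂comp.inter_right Metric.isClosed_closedBall
    have hzK₂ : z ∈ K₂ := hzG.1
    have hCne : C.Nonempty := ⟨z, hzK₂, Metric.mem_closedBall_self hεpos.le⟩
    have key : ∀ a ∈ C, ∃ W Q : Set (EuclideanSpace ℝ (Fin N)),
        IsOpen W ∧ IsOpen Q ∧ a ∈ W ∧ x ∈ Q ∧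
        ∀ p ∈ (W ×ˢ Q) ∩ (K₂ ×ˢ K₁), (T p.1 p.2 ∩ Metric.ball z ε).Nonempty := by
      intro a ha
      obtain ⟨U, hU, hUsub⟩ := (hcont a ha.1 x hx).2 z (hzT a ha.2).2 (Metric.ball z ε)
        Metric.isOpen_ball (Metric.mem_ball_self hεpos)
      obtain ⟨O, hOopen, hOmem, hOsub⟩ := mem_nhdsWithin.mp hU
      obtain ⟨W, Q, hW, hQ, haW, hxQ, hWQ⟩ := isOpen_prod_iff.mp hOopen a x hOmem
      exact ⟨W, Q, hW, hQ, haW, hxQ, fun p hp => hUsub p (hOsub ⟨hWQ hp.1, hp.2⟩)⟩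
    choose W Q hWopen hQopen haW hxQ hkey using key
    obtain ⟨tF, htF⟩ := hCcomp.elim_nhds_subcover' (fun a ha => W a ha)
      (fun a ha => (hWopen a ha).mem_nhds (haW a ha))
    set Q' := ⋂ a ∈ tF, Q a.1 a.2 with hQ'
    have hQ'open : IsOpen Q' := isOpen_biInter_finset (fun a _ => hQopen a.1 a.2)
    have hxQ' : x ∈ Q' := mem_iInter₂.mpr (fun a _ => hxQ a.1 a.2)
    refine ⟨Q' ∩ K₁, inter_mem (mem_nhdsWithin_of_mem_nhds (hQ'open.mem_nhds hxQ'))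
      self_mem_nhdsWithin, ?_⟩
    rintro u ⟨huQ, huK⟩
    have hslices : ∀ a ∈ C, ∃ b, (a, b) ∈ GraphOn K₂ (fun y => T y u) ∩
        (Metric.closedBall z ε ×ˢ Metric.closedBall z ε) := by
      intro a ha
      obtain ⟨i, hi, haWi⟩ := mem_iUnion₂.mp (htF ha)
      have hu_in : u ∈ Q i.1 i.2 := (mem_iInter₂.mp huQ) i hi
      obtain ⟨b, hbT, hbball⟩ := hkey i.1 i.2 (a, u) ⟨⟨haWi, hu_in⟩, ⟨ha.1, huK⟩⟩
      exact ⟨b, ⟨⟨ha.1, hbT⟩, ⟨ha.2, Metric.ball_subset_closedBall hbball⟩⟩⟩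
    obtain ⟨yu, hyu⟩ := cesaro_fix
      (((hrot u huK).1).inter ((convex_closedBall z ε).prod (convex_closedBall z ε)))
      (IsCompact.of_isClosed_subset (hK₂comp.prod hK₂comp)
        ((graph_closed u huK).inter (Metric.isClosed_closedBall.prod Metric.isClosed_closedBall))
        (fun p hp => ⟨hp.1.1, hTK _ hp.1.1 _ huK hp.1.2⟩))
      hCne hslices
      (fun p hp => ⟨hTK _ hp.1.1 _ huK hp.1.2, hp.2.2⟩)
    exact ⟨yu, ⟨hyu.1.1, hyu.1.2⟩, hεV hyu.2.2⟩
end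

section
/- Let K₁ ⊆ ℝ^N be nonempty and compact and K₂ ⊆ ℝ^N nonempty, compact and convex. Let T : K₂ × K₁ → 2^{K₂} be a set-valued mapping such that T(·, x) is rotund for every x ∈ K₁ and T is continuous on K₂ × K₁ with nonempty closed values, and let f : ℝ^N × ℝ^N → ℝ be continuous on K₁ × K₂. Then there exist a continuous map r : K₁ → ℝ^N with r(x) ∈ R'_{SE}(x) for every x ∈ K₁, and a point x* ∈ K₁, such that f(x*, r(x*)) ≤ f(x, r(x)) for all x ∈ K₁; in particular, (x*, y*) with y* = r(x*) ∈ R'_{SE}(x*) is a solution of the generalized Stackelberg equilibrium problem: minimize f(x, y) subject to y ∈ R'_{SE}(x), x ∈ K₁. -/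
/-!
For each `x`, the graph `G x` of `T (·, x)` is convex (rotundity) and closed (upper
semicontinuity with closed values). A linear functional separating `G x` from the diagonal is
impossible, so `R'_SE(x)` is nonempty, and it is compact and convex. The graph of
`x ↦ R'_SE(x)` is closed, which makes this map upper semicontinuous. Lower semicontinuity at
`x₀` comes from rotundity: if `R'_SE(x₀)` has two points, there are diagonal points `(c, c)` in
the interior of `G x₀` arbitrarily close to any fixed point, and near such a `c` the lower
semicontinuity of `T` and the same fixed-point argument, run in a small ball around `c`, give
fixed points for all `x` near `x₀`. A continuous map with compact convex values has a
continuous least-norm selection `r`, and `x ↦ f (x, r x)` attains its minimum on `K₁`.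
-/

open Filter Topology Set Pointwise

section FixedPoint

variable {E : Type*} [AddCommGroup E] [Module ℝ E] [TopologicalSpace E] [IsTopologicalAddGroup E]
  [ContinuousSMul ℝ E] [LocallyConvexSpace ℝ E] [T2Space E]

theorem exists_diag_mem_of_convex_of_isClosed {K : Set E} (hKne : K.Nonempty) (hK : IsCompact K)
    (hKconv : Convex ℝ K) {G : Set (E × E)} (hGconv : Convex ℝ G) (hG : IsClosed G)
    (hKG : ∀ y ∈ K, ∃ z ∈ K, (y, z) ∈ G) : ∃ y ∈ K, (y, y) ∈ G := by
  by_contra! hno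
  obtain ⟨φ, u, v, hφG, huv, hφD⟩ := geometric_hahn_banach_compact_closed
    (hGconv.inter (hKconv.prod hKconv))
    ((hK.prod hK).of_isClosed_subset (hG.inter (hK.isClosed.prod hK.isClosed)) inter_subset_right)
    (hKconv.linear_image (LinearMap.id.prod LinearMap.id))
    (hK.image (continuous_id.prodMk continuous_id)).isClosed
    (disjoint_right.mpr fun _ ⟨y, hy, hyp⟩ hG' => hno y hy (by rw [← hyp] at hG'; exact hG'.1))
  -- At a minimiser `y₀` of `φ (0, ·)` on `K`, every `(y₀, z) ∈ G` has `φ (y₀, y₀) ≤ φ (y₀, z)`.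
  obtain ⟨y₀, hy₀, hmin⟩ := hK.exists_isMinOn hKne
    (φ.continuous.comp (continuous_const.prodMk continuous_id)).continuousOn
  obtain ⟨z₀, hz₀, hGz₀⟩ := hKG y₀ hy₀
  have hsplit (a b : E) : φ (a, b) = φ (a, 0) + φ (0, b) := by
    rw [← map_add, Prod.mk_add_mk, add_zero, zero_add]
  have h₁ := hφG (y₀, z₀) ⟨hGz₀, hy₀, hz₀⟩
  have h₂ := hφD (y₀, y₀) ⟨y₀, hy₀, rfl⟩
  have h₃ : φ (0, y₀) ≤ φ (0, z₀) := hmin hz₀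
  rw [hsplit] at h₁ h₂
  linarith

end FixedPoint

section SetValued

variable {X Y : Type*} [TopologicalSpace X] [TopologicalSpace Y] {s : Set X} {Φ : X → Set Y}

theorem isClosed_graphOn_of_uscWithinAt [RegularSpace Y] (hs : IsClosed s)
    (hΦ : ∀ x ∈ s, UscWithinAt Φ s x) (hΦcl : ∀ x ∈ s, IsClosed (Φ x)) :
    IsClosed (GraphOn s Φ) := by
  refine isOpen_compl_iff.mp <| isOpen_iff_mem_nhds.mpr fun ⟨x, y⟩ hxy => ?_
  by_cases hx : x ∈ s
  · have hy : y ∉ closure (Φ x) := by rw [(hΦcl x hx).closure_eq]; exact fun hy => hxy ⟨hx, hy⟩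
    obtain ⟨V, ⟨hV, hΦV⟩, W, hW, hVW⟩ :=
      (hasBasis_nhdsSet _).disjoint_iff (𝓝 y).basis_sets |>.mp (disjoint_nhdsSet_nhds.mpr hy)
    obtain ⟨U, hU, hUV⟩ := hΦ x hx V hV hΦV
    filter_upwards [(continuous_fst.tendsto _).eventually (mem_nhdsWithin_iff_eventually.mp hU),
      (continuous_snd.tendsto _).eventually hW] with p hpU hpW hp
    exact disjoint_left.mp hVW (hUV _ (hpU hp.1) hp.2) hpW
  · filter_upwards [(continuous_fst.tendsto _).eventually (hs.isOpen_compl.mem_nhds hx)]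
      with p hp hps using hp hps.1

theorem uscWithinAt_of_isClosed_graphOn {K : Set Y} (hK : IsCompact K) (hΦK : ∀ x ∈ s, Φ x ⊆ K)
    (hΓ : IsClosed (GraphOn s Φ)) (x₀ : X) : UscWithinAt Φ s x₀ := by
  intro V hV hΦV
  have : ∀ᶠ x in 𝓝 x₀, ∀ y ∈ K, (x, y) ∈ GraphOn s Φ → y ∈ V := by
    refine hK.eventually_forall_of_forall_eventually fun y _ => ?_
    by_cases h : (x₀, y) ∈ GraphOn s Φ
    · filter_upwards [(continuous_snd.tendsto _).eventually (hV.mem_nhds (hΦV h.2))]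
        with p hp _ using hp
    · filter_upwards [hΓ.isOpen_compl.mem_nhds h] with p hp hpΓ using absurd hpΓ hp
  exact ⟨_, inter_mem_nhdsWithin s this, fun x ⟨hxs, hx⟩ y hy =>
    hx y (hΦK x hxs hy) ⟨hxs, hy⟩⟩

theorem MapClusterPt.prodMk_of_le_nhds {l : Filter X} {x₀ : X} (hl : l ≤ 𝓝 x₀) {f : X → Y}
    {y : Y} (h : MapClusterPt y l f) : MapClusterPt (x₀, y) l fun x => (x, f x) := by
  rw [mapClusterPt_iff_frequently] at h ⊢
  intro W hW
  obtain ⟨U, hU, V, hV, hUV⟩ := mem_nhds_prod_iff.mp hW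
  exact ((h V hV).and_eventually (hl hU)).mono fun x hx => hUV ⟨hx.2, hx.1⟩

end SetValued

section MinNorm

variable {F : Type*} [NormedAddCommGroup F] [InnerProductSpace ℝ F]

theorem norm_sq_add_norm_sub_sq_le_of_inner_sub_nonneg {v w : F} (h : 0 ≤ inner ℝ v (w - v)) :
    ‖v‖ ^ 2 + ‖w - v‖ ^ 2 ≤ ‖w‖ ^ 2 := by
  have := norm_add_sq_real v (w - v)
  rw [add_sub_cancel] at this
  linarith

theorem norm_le_of_inner_sub_nonneg {v w : F} (h : 0 ≤ inner ℝ v (w - v)) : ‖v‖ ≤ ‖w‖ :=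
  (pow_le_pow_iff_left₀ (norm_nonneg _) (norm_nonneg _) two_ne_zero).mp <| by
    linarith [norm_sq_add_norm_sub_sq_le_of_inner_sub_nonneg h, sq_nonneg ‖w - v‖]

theorem eq_of_inner_sub_nonneg_of_norm_le {v w : F} (h : 0 ≤ inner ℝ v (w - v))
    (hw : ‖w‖ ≤ ‖v‖) : w = v := by
  have hsq : ‖w - v‖ ^ 2 ≤ 0 := by
    nlinarith [norm_sq_add_norm_sub_sq_le_of_inner_sub_nonneg h, norm_nonneg w]
  exact sub_eq_zero.mp <| norm_eq_zero.mp <| le_antisymm (by nlinarith [norm_nonneg (w - v)])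
    (norm_nonneg _)

theorem exists_inner_sub_nonneg {C : Set F} (hne : C.Nonempty) (hC : IsComplete C)
    (hconv : Convex ℝ C) : ∃ v ∈ C, ∀ w ∈ C, 0 ≤ inner ℝ v (w - v) := by
  obtain ⟨v, hv, hmin⟩ := exists_norm_eq_iInf_of_complete_convex hne hC hconv 0
  refine ⟨v, hv, fun w hw => ?_⟩
  simpa [inner_neg_left] using (norm_eq_iInf_iff_real_inner_le_zero hconv hv).mp hmin w hw

section Selection

variable {X : Type*} [TopologicalSpace X] {s : Set X} {R : X → Set F} {K : Set F}

-- `r x` is the least-norm point of `R x`. A cluster point of `r` at `x₀` lies in `R x₀` (closed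
-- graph) and has norm at most `‖r x₀‖` (lower semicontinuity), so it is `r x₀`.
theorem continuousOn_of_inner_sub_nonneg (hK : IsCompact K) (hRK : ∀ x ∈ s, R x ⊆ K)
    (hΓ : IsClosed (GraphOn s R)) (hlsc : ∀ x ∈ s, LscWithinAt R s x) {r : X → F}
    (hr : ∀ x ∈ s, r x ∈ R x ∧ ∀ w ∈ R x, 0 ≤ inner ℝ (r x) (w - r x)) : ContinuousOn r s := by
  intro x₀ hx₀
  refine hK.tendsto_nhds_of_unique_mapClusterPt
    (eventually_nhdsWithin_of_forall fun x hx => hRK x hx (hr x hx).1) fun y _ hy => ?_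
  have hyR : y ∈ R x₀ :=
    (hΓ.mem_of_mapClusterPt (hy.prodMk_of_le_nhds nhdsWithin_le_nhds)
      (eventually_nhdsWithin_of_forall fun x hx => ⟨hx, (hr x hx).1⟩)).2
  have hy_norm : ‖y‖ ≤ ‖r x₀‖ := by
    refine le_of_forall_pos_le_add fun ε hε => ?_
    obtain ⟨U, hU, hUR⟩ :=
      hlsc x₀ hx₀ (r x₀) (hr x₀ hx₀).1 _ Metric.isOpen_ball (Metric.mem_ball_self hε)
    refine (isClosed_le continuous_norm continuous_const).mem_of_mapClusterPt hy ?_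
    filter_upwards [hU, self_mem_nhdsWithin] with x hxU hx
    obtain ⟨c, hcR, hc⟩ := hUR x hxU
    calc ‖r x‖ ≤ ‖c‖ := norm_le_of_inner_sub_nonneg ((hr x hx).2 c hcR)
      _ ≤ ‖r x₀‖ + ‖c - r x₀‖ := norm_le_insert' c (r x₀)
      _ ≤ ‖r x₀‖ + ε := by rw [← dist_eq_norm]; linarith [Metric.mem_ball.mp hc]
  exact eq_of_inner_sub_nonneg_of_norm_le ((hr x₀ hx₀).2 y hyR) hy_norm

theorem exists_continuousOn_selection (hK : IsCompact K) (hRK : ∀ x ∈ s, R x ⊆ K)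
    (hΓ : IsClosed (GraphOn s R)) (hne : ∀ x ∈ s, (R x).Nonempty)
    (hconv : ∀ x ∈ s, Convex ℝ (R x)) (hlsc : ∀ x ∈ s, LscWithinAt R s x) :
    ∃ r : X → F, ContinuousOn r s ∧ ∀ x ∈ s, r x ∈ R x := by
  have hcomplete (x : X) (hx : x ∈ s) : IsComplete (R x) := by
    have hR : R x = Prod.mk x ⁻¹' GraphOn s R := by ext y; simp [GraphOn, hx]
    exact (hK.of_isClosed_subset (hR ▸ hΓ.preimage (by fun_prop)) (hRK x hx)).isComplete
  have hsel (x : X) : ∃ v, x ∈ s → v ∈ R x ∧ ∀ w ∈ R x, 0 ≤ inner ℝ v (w - v) := by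
    by_cases hx : x ∈ s
    · obtain ⟨v, hv⟩ := exists_inner_sub_nonneg (hne x hx) (hcomplete x hx) (hconv x hx)
      exact ⟨v, fun _ => hv⟩
    · exact ⟨0, fun h => absurd h hx⟩
  choose r hr using hsel
  exact ⟨r, continuousOn_of_inner_sub_nonneg hK hRK hΓ hlsc hr, fun x hx => (hr x hx).1⟩

end Selection

end MinNorm

/-- The Stackelberg equilibrium response set `R'_SE(x)`. -/
def responseSet {E X : Type*} (K : Set E) (T : E → X → Set E) (x : X) : Set E :=
  {y | y ∈ K ∧ y ∈ T y x}

section ResponseSet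

variable {E X : Type*} {K : Set E} {T : E → X → Set E}

theorem convex_responseSet [AddCommGroup E] [Module ℝ E] {x : X}
    (h : Convex ℝ (GraphOn K fun y => T y x)) : Convex ℝ (responseSet K T x) :=
  h.linear_preimage (LinearMap.id.prod LinearMap.id)

section Topology

variable [TopologicalSpace E] [TopologicalSpace X] {s : Set X}

theorem IsClosed.graphOn_slice (hΓ : IsClosed (GraphOn (K ×ˢ s) fun p : E × X => T p.1 p.2))
    {x : X} (hx : x ∈ s) : IsClosed (GraphOn K fun y => T y x) := by
  have : GraphOn K (fun y => T y x) =
      (fun q : E × E => ((q.1, x), q.2)) ⁻¹' GraphOn (K ×ˢ s) fun p => T p.1 p.2 := by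
    ext q; simp [GraphOn, hx]
  exact this ▸ hΓ.preimage (by fun_prop)

theorem IsClosed.graphOn_responseSet
    (hΓ : IsClosed (GraphOn (K ×ˢ s) fun p : E × X => T p.1 p.2)) :
    IsClosed (GraphOn s (responseSet K T)) := by
  have : GraphOn s (responseSet K T) =
      (fun q : X × E => ((q.2, q.1), q.2)) ⁻¹' GraphOn (K ×ˢ s) fun p => T p.1 p.2 := by
    ext q; simp only [GraphOn, responseSet, mem_ofPred_eq, mem_preimage, mem_prod]; tauto
  exact this ▸ hΓ.preimage (by fun_prop)

end Topology

section Normed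

variable [NormedAddCommGroup E] [NormedSpace ℝ E]

theorem responseSet_inter_nonempty {x : X} (hGconv : Convex ℝ (GraphOn K fun y => T y x))
    (hG : IsClosed (GraphOn K fun y => T y x)) {K' : Set E} (hK'K : K' ⊆ K)
    (hK'ne : K'.Nonempty) (hK' : IsCompact K') (hK'conv : Convex ℝ K')
    (hTK' : ∀ y ∈ K', (T y x ∩ K').Nonempty) : (responseSet K T x ∩ K').Nonempty := by
  obtain ⟨y, hy, hyG⟩ := exists_diag_mem_of_convex_of_isClosed hK'ne hK' hK'conv hGconv hG
    fun y hy => (hTK' y hy).imp fun _ ⟨hzT, hzK'⟩ => ⟨hzK', hK'K hy, hzT⟩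
  exact ⟨y, hyG, hy⟩

theorem RotundOn.mem_closure_setOf_diag_mem_interior {Φ : E → Set E} (h : RotundOn K Φ)
    {y₀ y₁ : E} (hy₀ : (y₀, y₀) ∈ GraphOn K Φ) (hy₁ : (y₁, y₁) ∈ GraphOn K Φ) (hne : y₁ ≠ y₀) :
    y₀ ∈ closure {c | (c, c) ∈ interior (GraphOn K Φ)} := by
  obtain ⟨l, hl, hfront⟩ := h.2 _ hy₁ _ hy₀ hne hne
  set c := l • y₁ + (1 - l) • y₀
  have hcG : (c, c) ∈ GraphOn K Φ := h.1 hy₁ hy₀ hl.1.le (sub_nonneg.2 hl.2.le) (by ring)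
  have hc : (c, c) ∈ interior (GraphOn K Φ) := by
    by_contra hc
    exact hfront ⟨subset_closure hcG, hc⟩
  have hseg : openSegment ℝ c y₀ ⊆ {c | (c, c) ∈ interior (GraphOn K Φ)} :=
    fun _ ⟨a, b, ha, hb, hab, hz⟩ => h.1.openSegment_interior_closure_subset_interior hc
      (subset_closure hy₀) ⟨a, b, ha, hb, hab, hz ▸ rfl⟩
  exact closure_mono hseg (segment_subset_closure_openSegment (right_mem_segment ℝ c y₀))

section Lsc

variable [TopologicalSpace X] {s : Set X}

theorem eventually_responseSet_inter_ball_nonempty (hK : IsCompact K) (hKconv : Convex ℝ K)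
    (hTK : ∀ y ∈ K, ∀ x ∈ s, T y x ⊆ K) (hGconv : ∀ x ∈ s, Convex ℝ (GraphOn K fun y => T y x))
    (hG : ∀ x ∈ s, IsClosed (GraphOn K fun y => T y x)) {x₀ : X}
    (hlsc : ∀ y ∈ K, LscWithinAt (fun p : E × X => T p.1 p.2) (K ×ˢ s) (y, x₀)) {c : E}
    (hc : (c, c) ∈ interior (GraphOn K fun y => T y x₀)) {ε : ℝ} (hε : 0 < ε) :
    ∀ᶠ x in 𝓝[s] x₀, (responseSet K T x ∩ Metric.ball c ε).Nonempty := by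
  obtain ⟨ρ, hρ, hball⟩ := Metric.isOpen_iff.mp isOpen_interior _ hc
  obtain ⟨δ, hδ, hδρε⟩ := exists_between (lt_min hρ hε)
  obtain ⟨hδρ, hδε⟩ := lt_min_iff.mp hδρε
  set K' := K ∩ Metric.closedBall c δ
  have hK' : IsCompact K' := hK.inter_right Metric.isClosed_closedBall
  have hcT (y : E) (hy : y ∈ K') : c ∈ T y x₀ := by
    have hyc : (y, c) ∈ Metric.ball (c, c) ρ := by
      rw [Metric.mem_ball, Prod.dist_eq, dist_self]
      exact max_lt ((Metric.mem_closedBall.mp hy.2).trans_lt hδρ) hρ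
    exact (interior_subset (hball hyc)).2
  have hnear : ∀ᶠ x in 𝓝 x₀, ∀ y ∈ K', x ∈ s → y ∈ K → (T y x ∩ Metric.ball c δ).Nonempty := by
    refine hK'.eventually_forall_of_forall_eventually fun y hy => ?_
    obtain ⟨U, hU, hUT⟩ := hlsc y hy.1 c (hcT y hy) _ Metric.isOpen_ball (Metric.mem_ball_self hδ)
    filter_upwards [(continuous_swap.tendsto (x₀, y)).eventually
      (mem_nhdsWithin_iff_eventually.mp hU)] with z hz hzs hzK
    exact hUT _ (hz ⟨hzK, hzs⟩)
  rw [eventually_nhdsWithin_iff]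
  filter_upwards [hnear] with x hx hxs
  obtain ⟨y, hyR, hyK'⟩ := responseSet_inter_nonempty (hGconv x hxs) (hG x hxs) inter_subset_left
    ⟨c, (interior_subset hc).1, Metric.mem_closedBall_self hδ.le⟩ hK'
    (hKconv.inter (convex_closedBall c δ)) fun y hy =>
      (hx y hy hxs hy.1).imp fun z ⟨hzT, hzc⟩ =>
        ⟨hzT, hTK y hy.1 x hxs hzT, Metric.ball_subset_closedBall hzc⟩
  exact ⟨y, hyR, (Metric.mem_closedBall.mp hyK'.2).trans_lt hδε⟩

theorem lscWithinAt_responseSet (hK : IsCompact K) (hKconv : Convex ℝ K)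
    (hTK : ∀ y ∈ K, ∀ x ∈ s, T y x ⊆ K) (hGconv : ∀ x ∈ s, Convex ℝ (GraphOn K fun y => T y x))
    (hG : ∀ x ∈ s, IsClosed (GraphOn K fun y => T y x)) {x₀ : X}
    (hlsc : ∀ y ∈ K, LscWithinAt (fun p : E × X => T p.1 p.2) (K ×ˢ s) (y, x₀))
    (hrot : RotundOn K fun y => T y x₀) (hne : ∀ x ∈ s, (responseSet K T x).Nonempty)
    (husc : UscWithinAt (responseSet K T) s x₀) : LscWithinAt (responseSet K T) s x₀ := by
  intro y₀ hy₀ V hV hy₀V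
  rw [← Filter.eventually_iff_exists_mem]
  rcases em (∃ y₁ ∈ responseSet K T x₀, y₁ ≠ y₀) with ⟨y₁, hy₁, hy₁₀⟩ | hsingle
  · obtain ⟨ε, hε, hεV⟩ := Metric.isOpen_iff.mp hV y₀ hy₀V
    obtain ⟨c, hc, hcy₀⟩ := Metric.mem_closure_iff.mp
      (hrot.mem_closure_setOf_diag_mem_interior hy₀ hy₁ hy₁₀) (ε / 2) (half_pos hε)
    filter_upwards [eventually_responseSet_inter_ball_nonempty hK hKconv hTK hGconv hG hlsc hc
      (half_pos hε)] with x ⟨y, hyR, hyc⟩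
    refine ⟨y, hyR, hεV ?_⟩
    rw [Metric.mem_ball] at hyc ⊢
    linarith [dist_triangle y c y₀, dist_comm y₀ c]
  · obtain ⟨U, hU, hUV⟩ := husc V hV fun y hy => by
      by_contra hyV
      exact hsingle ⟨y, hy, fun h => hyV (h ▸ hy₀V)⟩
    filter_upwards [hU, self_mem_nhdsWithin] with x hxU hx
    obtain ⟨y, hy⟩ := hne x hx
    exact ⟨y, hy, hUV x hxU hy⟩

end Lsc

end Normed

end ResponseSet

/-- Existence of solutions for the generalized Stackelberg equilibrium problem:
with `K₁ ⊆ ℝ^N` nonempty compact, `K₂ ⊆ ℝ^N` nonempty compact convex, `T(·, x)` rotund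
for every `x ∈ K₁`, `T` continuous on `K₂ × K₁` with nonempty closed values, and
`f` continuous on `K₁ × K₂`, there exist a continuous selection `r` of
`R'_SE(x) = {y ∈ K₂ : y ∈ T(y, x)}` and a point `x⋆ ∈ K₁` minimizing `x ↦ f(x, r(x))`
over `K₁`. -/
theorem stmt_11 {N : ℕ}
    (K₁ K₂ : Set (EuclideanSpace ℝ (Fin N)))
    (hK₁ne : K₁.Nonempty) (hK₁comp : IsCompact K₁)
    (hK₂ne : K₂.Nonempty) (hK₂comp : IsCompact K₂) (hK₂conv : Convex ℝ K₂)
    (T : EuclideanSpace ℝ (Fin N) → EuclideanSpace ℝ (Fin N) →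
      Set (EuclideanSpace ℝ (Fin N)))
    (hTK : ∀ y ∈ K₂, ∀ x ∈ K₁, T y x ⊆ K₂)
    (hrot : ∀ x ∈ K₁, RotundOn K₂ (fun y => T y x))
    (hcont : ∀ y ∈ K₂, ∀ x ∈ K₁,
      UscWithinAt (fun p : EuclideanSpace ℝ (Fin N) × EuclideanSpace ℝ (Fin N) =>
        T p.1 p.2) (K₂ ×ˢ K₁) (y, x) ∧
      LscWithinAt (fun p : EuclideanSpace ℝ (Fin N) × EuclideanSpace ℝ (Fin N) =>
        T p.1 p.2) (K₂ ×ˢ K₁) (y, x))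
    (hval : ∀ y ∈ K₂, ∀ x ∈ K₁, (T y x).Nonempty ∧ IsClosed (T y x))
    (f : EuclideanSpace ℝ (Fin N) → EuclideanSpace ℝ (Fin N) → ℝ)
    (hf : ContinuousOn (fun p : EuclideanSpace ℝ (Fin N) × EuclideanSpace ℝ (Fin N) =>
      f p.1 p.2) (K₁ ×ˢ K₂)) :
    ∃ r : EuclideanSpace ℝ (Fin N) → EuclideanSpace ℝ (Fin N),
      ContinuousOn r K₁ ∧ (∀ x ∈ K₁, r x ∈ K₂ ∧ r x ∈ T (r x) x) ∧
      ∃ xs ∈ K₁, ∀ x ∈ K₁, f xs (r xs) ≤ f x (r x) := by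
  have hΓ : IsClosed (GraphOn (K₂ ×ˢ K₁) fun p : EuclideanSpace ℝ (Fin N) × _ => T p.1 p.2) :=
    isClosed_graphOn_of_uscWithinAt (hK₂comp.isClosed.prod hK₁comp.isClosed)
      (fun p hp => (hcont p.1 hp.1 p.2 hp.2).1) fun p hp => (hval p.1 hp.1 p.2 hp.2).2
  have hG (x : _) (hx : x ∈ K₁) := hΓ.graphOn_slice hx
  have hGconv (x : _) (hx : x ∈ K₁) := (hrot x hx).1
  have hRK (x : _) (_ : x ∈ K₁) : responseSet K₂ T x ⊆ K₂ := fun _ hy => hy.1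
  have hRne (x : _) (hx : x ∈ K₁) : (responseSet K₂ T x).Nonempty :=
    (responseSet_inter_nonempty (hGconv x hx) (hG x hx) subset_rfl hK₂ne hK₂comp hK₂conv
      fun y hy => (hval y hy x hx).1.imp fun _ hz => ⟨hz, hTK y hy x hx hz⟩).mono inter_subset_left
  have hRΓ := hΓ.graphOn_responseSet
  obtain ⟨r, hr, hrR⟩ := exists_continuousOn_selection hK₂comp hRK hRΓ hRne
    (fun x hx => convex_responseSet (hGconv x hx)) fun x hx =>
      lscWithinAt_responseSet hK₂comp hK₂conv hTK hGconv hG (fun y hy => (hcont y hy x hx).2)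
        (hrot x hx) hRne (uscWithinAt_of_isClosed_graphOn hK₂comp hRK hRΓ x)
  obtain ⟨xs, hxs, hmin⟩ := hK₁comp.exists_isMinOn hK₁ne
    (hf.comp (continuousOn_id.prodMk hr) fun x hx => ⟨hx, hRK x hx (hrR x hx)⟩)
  exact ⟨r, hr, hrR, xs, hxs, hmin⟩
end

section
/- Let Λ, Ω, Y be normed vector spaces, X a reflexive Banach space, and D a nonempty compact convex subset of X. Let K : D × Λ → 2^D and F : D × D × Ω → 2^Y be set-valued mappings and C ⊆ Y a closed set with nonempty interior; define M₁(u, λ) = {x ∈ cl K(x, λ) : F(x, y, u) ∩ (Y \ (−int C)) ≠ ∅ for all y ∈ K(x, λ)}, and assume M₁(u, λ) ≠ ∅ for all (u, λ) in a neighborhood of (u₀, λ₀) ∈ Ω × Λ. Assume: (i) K(·, λ₀) is rotund and K is continuous at every point of D × {λ₀} with nonempty closed convex values; (ii) F is lower semicontinuous at every point of D × D × {u₀}; (iii) for every x ∈ M₁(u₀, λ₀) and every y ∈ K(x, λ₀), F(x, y, u₀) ∩ (Y \ (−C)) ≠ ∅. Then M₁(·, ·) is lower semicontinuous at (u₀,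 λ₀). -/
/-!
If `M₁` were not lower semicontinuous, there would be `x₀ ∈ M₁(u₀, λ₀)` and an open `V ∋ x₀`
such that solutions avoiding `V` exist for parameters arbitrarily close to `(u₀, λ₀)`.
Solutions are fixed points of `K(·, λ)`, so by compactness of `D` and upper semicontinuity of
`K` they accumulate at a fixed point `x̄ ∉ V` of `K(·, λ₀)`. Rotundity of `K(·, λ₀)`, applied
to `(x₀, x₀)` and `(x̄, x̄)`, yields points `w ∈ V` arbitrarily close to `x₀` with `(w, w)` in
the interior of the graph, so `K(w, λ₀)` contains a ball around `w`; lower semicontinuity and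
closed convex values then keep `w ∈ K(w, λ)` for `λ` near `λ₀`. Assumption (iii) with the
semicontinuity of `F` and `K` makes the defining condition of `M₁` hold at `w` for all nearby
parameters, so `w ∈ M₁(u, λ) ∩ V` near `(u₀, λ₀)`, a contradiction.
-/

open Filter Topology Set Pointwise

open Metric

section Semicontinuity

variable {α β : Type*} [TopologicalSpace α] [TopologicalSpace β]
  {Φ : α → Set β} {s : Set α} {a : α}

theorem LscWithinAt.eventually_inter_nonempty (h : LscWithinAt Φ s a) {x : β} (hx : x ∈ Φ a)
    {O : Set β} (hO : IsOpen O) (hxO : x ∈ O) : ∀ᶠ b in 𝓝[s] a, (Φ b ∩ O).Nonempty :=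
  let ⟨_, hU, hUO⟩ := h x hx O hO hxO
  mem_of_superset hU hUO

theorem LscAt.eventually_inter_nonempty (h : LscAt Φ a) {x : β} (hx : x ∈ Φ a)
    {O : Set β} (hO : IsOpen O) (hxO : x ∈ O) : ∀ᶠ b in 𝓝 a, (Φ b ∩ O).Nonempty :=
  let ⟨_, hU, hUO⟩ := h x hx O hO hxO
  mem_of_superset hU hUO

theorem UscWithinAt.eventually_subset (h : UscWithinAt Φ s a) {U : Set β} (hU : U ∈ 𝓝ˢ (Φ a)) :
    ∀ᶠ b in 𝓝[s] a, Φ b ⊆ U := by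
  obtain ⟨W, hWo, hΦW, hWU⟩ := mem_nhdsSet_iff_exists.mp hU
  obtain ⟨N, hN, hNW⟩ := h W hWo hΦW
  exact mem_of_superset hN fun b hb => (hNW b hb).trans hWU

theorem UscWithinAt.eventually_notMem [RegularSpace β] (h : UscWithinAt Φ s a) {f : α → β}
    (hf : ContinuousWithinAt f s a) (hcl : IsClosed (Φ a)) (hfa : f a ∉ Φ a) :
    ∀ᶠ b in 𝓝[s] a, f b ∉ Φ b := by
  rw [← hcl.closure_eq, ← disjoint_nhdsSet_nhds, Filter.disjoint_iff] at hfa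
  obtain ⟨U, hU, W, hW, hUW⟩ := hfa
  filter_upwards [h.eventually_subset hU, hf hW] with b hΦU hfW hfΦ
  exact hUW.notMem_of_mem_right hfW (hΦU hfΦ)

end Semicontinuity

theorem LscWithinAt.lscAt_slice {X Λ Z : Type*} [TopologicalSpace X] [TopologicalSpace Λ]
    [TopologicalSpace Z] {Φ : X × Λ → Set Z} {D : Set X} {w : X} {l₀ : Λ}
    (h : LscWithinAt Φ (D ×ˢ univ) (w, l₀)) (hw : w ∈ D) : LscAt (fun l => Φ (w, l)) l₀ := by
  have hslice : Tendsto (fun l => (w, l)) (𝓝 l₀) (𝓝[D ×ˢ univ] (w, l₀)) :=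
    tendsto_nhdsWithin_iff.mpr
      ⟨(Continuous.prodMk_right w).tendsto l₀, Eventually.of_forall fun _ => ⟨hw, mem_univ _⟩⟩
  exact fun _ hx _ hO hxO => ⟨_, hslice (h.eventually_inter_nonempty hx hO hxO), fun _ hb => hb⟩

theorem exists_fixedPoint_of_frequently {X Λ : Type*} [TopologicalSpace X] [RegularSpace X]
    [TopologicalSpace Λ] {D E : Set X} (hD : IsCompact D) (hE : IsClosed E)
    {K : X → Λ → Set X} {l₀ : Λ}
    (hK : ∀ x ∈ D, UscWithinAt (fun p : X × Λ => K p.1 p.2) (D ×ˢ univ) (x, l₀))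
    (hKcl : ∀ x ∈ D, IsClosed (K x l₀)) (h : ∃ᶠ l in 𝓝 l₀, ∃ x ∈ D ∩ E, x ∈ K x l) :
    ∃ x ∈ D ∩ E, x ∈ K x l₀ := by
  by_contra! hnot
  suffices ∀ᶠ l in 𝓝 l₀, ∀ x ∈ D ∩ E, x ∈ D → x ∉ K x l by
    obtain ⟨l, ⟨x, hx, hxK⟩, hl⟩ := (h.and_eventually this).exists
    exact hl x hx hx.1 hxK
  refine (hD.inter_right hE).eventually_forall_of_forall_eventually fun x hx => ?_
  have hx' := (hK x hx.1).eventually_notMem continuous_fst.continuousWithinAt (hKcl x hx.1)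
    (hnot x hx)
  rw [eventually_nhdsWithin_iff] at hx'
  have hswap : Tendsto Prod.swap (𝓝 (l₀, x)) (𝓝 (x, l₀)) := continuous_swap.tendsto _
  filter_upwards [hswap.eventually hx'] with q hq hqD
  exact hq ⟨hqD, mem_univ _⟩

section NormedSpace

variable {X : Type*} [NormedAddCommGroup X] [NormedSpace ℝ X]

theorem ContinuousLinearMap.exists_norm_le_one_half_opNorm_lt_apply (f : X →L[ℝ] ℝ)
    (hf : f ≠ 0) : ∃ v : X, ‖v‖ ≤ 1 ∧ ‖f‖ / 2 < f v := by
  obtain ⟨x, hx, hfx⟩ :=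
    f.exists_lt_apply_of_lt_opNorm (half_lt_self (norm_pos_iff.mpr hf))
  rw [Real.norm_eq_abs] at hfx
  rcases le_or_gt 0 (f x) with h | h
  · exact ⟨x, hx.le, by rwa [abs_of_nonneg h] at hfx⟩
  · exact ⟨-x, by rw [norm_neg]; exact hx.le, by rw [map_neg]; rwa [abs_of_neg h] at hfx⟩

/-- Otherwise a functional separating `w` from `s` exceeds its bound on `s` near `w + r • v`,
where `v` almost attains the norm of the functional. -/
theorem Convex.mem_of_forall_closedBall_exists_dist_lt {s : Set X} (hconv : Convex ℝ s)
    (hclosed : IsClosed s) {w : X} {r : ℝ} (hr : 0 < r)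
    (hnear : ∀ z ∈ closedBall w r, ∃ c ∈ s, dist z c < r / 2) : w ∈ s := by
  by_contra hw
  obtain ⟨f, u, hfs, hfw⟩ := geometric_hahn_banach_closed_point hconv hclosed hw
  have hf : f ≠ 0 := by
    rintro rfl
    obtain ⟨c, hc, -⟩ := hnear w (mem_closedBall_self hr.le)
    simpa using (hfs c hc).trans hfw
  obtain ⟨v, hv, hfv⟩ := f.exists_norm_le_one_half_opNorm_lt_apply hf
  obtain ⟨c, hc, hzc⟩ := hnear (w + r • v) (by
    rw [mem_closedBall, dist_self_add_left, norm_smul, Real.norm_of_nonneg hr.le]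
    exact mul_le_of_le_one_right hr.le hv)
  have hfz : f (w + r • v) - f c ≤ ‖f‖ * dist (w + r • v) c := by
    rw [← map_sub, dist_eq_norm]
    exact (le_abs_self _).trans (f.le_opNorm _)
  have hfz' : f (w + r • v) = f w + r * f v := by simp
  nlinarith [hfs c hc, mul_lt_mul_of_pos_left hzc (norm_pos_iff.mpr hf),
    mul_lt_mul_of_pos_left hfv hr]

theorem LscAt.eventually_mem_of_closedBall_subset {Λ : Type*} [TopologicalSpace Λ]
    {Φ : Λ → Set X} {l₀ : Λ} (hΦ : LscAt Φ l₀) (hconv : ∀ l, Convex ℝ (Φ l))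
    (hclosed : ∀ l, IsClosed (Φ l)) {w : X} {r : ℝ} (hr : 0 < r)
    (hball : closedBall w r ⊆ Φ l₀) (hcomp : IsCompact (closedBall w r)) :
    ∀ᶠ l in 𝓝 l₀, w ∈ Φ l := by
  obtain ⟨t, htB, htfin, hcover⟩ := finite_cover_balls_of_compact hcomp (by positivity : 0 < r / 4)
  have hmeets : ∀ᶠ l in 𝓝 l₀, ∀ z ∈ t, (Φ l ∩ ball z (r / 4)).Nonempty :=
    (eventually_all_finite htfin).mpr fun z hz =>
      hΦ.eventually_inter_nonempty (hball (htB hz)) isOpen_ball (mem_ball_self (by positivity))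
  filter_upwards [hmeets] with l hl
  refine (hconv l).mem_of_forall_closedBall_exists_dist_lt (hclosed l) hr fun y hy => ?_
  obtain ⟨z, hz, hyz⟩ := mem_iUnion₂.mp (hcover hy)
  obtain ⟨c, hc, hcz⟩ := hl z hz
  refine ⟨c, hc, ?_⟩
  calc dist y c ≤ dist y z + dist c z := dist_triangle_right _ _ _
    _ < r / 4 + r / 4 := add_lt_add hyz hcz
    _ = r / 2 := by ring

end NormedSpace

theorem exists_closedBall_subset_of_mem_interior_graphOn {X : Type*} [PseudoMetricSpace X]
    {D : Set X} {Φ : X → Set X} {w : X}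
    (hw : (w, w) ∈ interior (GraphOn D Φ)) :
    ∃ r > 0, closedBall w r ⊆ D ∧ closedBall w r ⊆ Φ w := by
  obtain ⟨ε, hε, hball⟩ := Metric.isOpen_iff.mp isOpen_interior _ hw
  have hG : ∀ a ∈ ball w ε, ∀ b ∈ ball w ε, (a, b) ∈ GraphOn D Φ := fun a ha b hb =>
    interior_subset (hball (by rw [← ball_prod_same]; exact ⟨ha, hb⟩))
  have hsub : closedBall w (ε / 2) ⊆ ball w ε := closedBall_subset_ball (half_lt_self hε)
  exact ⟨ε / 2, half_pos hε, fun z hz => (hG z (hsub hz) w (mem_ball_self hε)).1,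
    fun z hz => (hG w (mem_ball_self hε) z (hsub hz)).2⟩

/-- Rotundity puts a diagonal point `(m, m)` in the interior of the graph, and the open segment
from `(x₀, x₀)` to it stays in the interior. -/
theorem RotundOn.mem_closure_diag_interior {X : Type*} [NormedAddCommGroup X] [NormedSpace ℝ X]
    {D : Set X} {Φ : X → Set X} (hrot : RotundOn D Φ) {x₀ x₁ : X}
    (h₀ : (x₀, x₀) ∈ GraphOn D Φ) (h₁ : (x₁, x₁) ∈ GraphOn D Φ) (hne : x₀ ≠ x₁) :
    x₀ ∈ closure {w | (w, w) ∈ interior (GraphOn D Φ)} := by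
  obtain ⟨l, hl, hfr⟩ := hrot.2 _ h₀ _ h₁ hne hne
  set m : X := l • x₀ + (1 - l) • x₁
  have hmG : (m, m) ∈ GraphOn D Φ :=
    hrot.1 h₀ h₁ hl.1.le (by linarith [hl.2]) (by ring)
  have hmint : (m, m) ∈ interior (GraphOn D Φ) := by
    by_contra h
    exact hfr ⟨subset_closure hmG, h⟩
  have hseg : openSegment ℝ x₀ m ⊆ {w | (w, w) ∈ interior (GraphOn D Φ)} := by
    rintro _ ⟨a, b, ha, hb, hab, rfl⟩
    exact hrot.1.combo_self_interior_mem_interior h₀ hmint ha.le hb hab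
  exact closure_mono hseg (segment_subset_closure_openSegment (left_mem_segment ℝ x₀ m))

/-- A tube-lemma argument over the compact set `K x₀ l₀`, combined with the upper
semicontinuity of `K`, makes the pointwise lower semicontinuity of `F` uniform. -/
theorem eventually_forall_inter_nonempty {X Λ Ω Y : Type*} [TopologicalSpace X]
    [TopologicalSpace Λ] [TopologicalSpace Ω] [TopologicalSpace Y] {D : Set X}
    {K : X → Λ → Set X} {F : X → X → Ω → Set Y} {O : Set Y} {x₀ : X} {u₀ : Ω} {l₀ : Λ}
    (hKD : ∀ x ∈ D, ∀ l, K x l ⊆ D) (hKc : IsCompact (K x₀ l₀))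
    (hK : UscWithinAt (fun p : X × Λ => K p.1 p.2) (D ×ˢ univ) (x₀, l₀))
    (hF : ∀ y ∈ K x₀ l₀,
      LscWithinAt (fun q : X × X × Ω => F q.1 q.2.1 q.2.2) (D ×ˢ D ×ˢ univ) (x₀, y, u₀))
    (hO : IsOpen O) (hFO : ∀ y ∈ K x₀ l₀, (F x₀ y u₀ ∩ O).Nonempty) :
    ∀ᶠ q : X × Ω × Λ in 𝓝 (x₀, u₀, l₀),
      q.1 ∈ D → ∀ y ∈ K q.1 q.2.2, (F q.1 y q.2.1 ∩ O).Nonempty := by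
  have hlocal : ∀ y ∈ K x₀ l₀, ∀ᶠ z : (X × Ω) × X in 𝓝 (x₀, u₀) ×ˢ 𝓝 y,
      z.1.1 ∈ D → z.2 ∈ D → (F z.1.1 z.2 z.1.2 ∩ O).Nonempty := by
    intro y hy
    obtain ⟨z, hz⟩ := hFO y hy
    have hev := eventually_nhdsWithin_iff.mp ((hF y hy).eventually_inter_nonempty hz.1 hO hz.2)
    rw [← nhds_prod_eq]
    have hcont : Continuous fun z : (X × Ω) × X => (z.1.1, z.2, z.1.2) := by fun_prop
    filter_upwards [hcont.tendsto ((x₀, u₀), y) |>.eventually hev] with z hz hzD hyD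
    exact hz ⟨hzD, hyD, mem_univ _⟩
  obtain ⟨P, hP, Q, hQ, hPQ⟩ :=
    eventually_prod_iff.mp (hKc.mem_prod_nhdsSet_of_forall hlocal)
  have hKQ := eventually_nhdsWithin_iff.mp (hK.eventually_subset hQ)
  have hxu : Tendsto (fun q : X × Ω × Λ => (q.1, q.2.1)) (𝓝 (x₀, u₀, l₀)) (𝓝 (x₀, u₀)) :=
    (by fun_prop : Continuous fun q : X × Ω × Λ => (q.1, q.2.1)).tendsto _
  have hxl : Tendsto (fun q : X × Ω × Λ => (q.1, q.2.2)) (𝓝 (x₀, u₀, l₀)) (𝓝 (x₀, l₀)) :=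
    (by fun_prop : Continuous fun q : X × Ω × Λ => (q.1, q.2.2)).tendsto _
  filter_upwards [hxu.eventually hP, hxl.eventually hKQ] with q hqP hqK hqD y hy
  exact hPQ hqP (hqK ⟨hqD, mem_univ _⟩ hy) hqD (hKD _ hqD _ hy)

theorem stmt_12_general {Λ Ω Y X : Type*}
    [NormedAddCommGroup Λ] [NormedSpace ℝ Λ]
    [NormedAddCommGroup Ω] [NormedSpace ℝ Ω]
    [NormedAddCommGroup Y] [NormedSpace ℝ Y]
    [NormedAddCommGroup X] [NormedSpace ℝ X]
    (D : Set X) (hDcomp : IsCompact D)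
    (K : X → Λ → Set X) (hKD : ∀ x ∈ D, ∀ l : Λ, K x l ⊆ D)
    (F : X → X → Ω → Set Y)
    (C : Set Y) (hCclosed : IsClosed C)
    (u₀ : Ω) (l₀ : Λ)
    (M₁ : Ω × Λ → Set X)
    (hM₁ : ∀ p : Ω × Λ, M₁ p = {x | x ∈ D ∧ x ∈ closure (K x p.2) ∧
      ∀ y ∈ K x p.2, (F x y p.1 ∩ (-(interior C))ᶜ).Nonempty})
    (hMne : ∃ U ∈ 𝓝 ((u₀, l₀) : Ω × Λ), ∀ p ∈ U, (M₁ p).Nonempty)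
    (hKrot : RotundOn D (fun x => K x l₀))
    (hKcont : ∀ x ∈ D,
      UscWithinAt (fun p : X × Λ => K p.1 p.2) (D ×ˢ (univ : Set Λ)) (x, l₀) ∧
      LscWithinAt (fun p : X × Λ => K p.1 p.2) (D ×ˢ (univ : Set Λ)) (x, l₀))
    (hKval : ∀ x ∈ D, ∀ l : Λ, (K x l).Nonempty ∧ IsClosed (K x l) ∧ Convex ℝ (K x l))
    (hFlsc : ∀ x ∈ D, ∀ y ∈ D,
      LscWithinAt (fun q : X × X × Ω => F q.1 q.2.1 q.2.2)
        (D ×ˢ D ×ˢ (univ : Set Ω)) (x, y, u₀))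
    (hF3 : ∀ x ∈ M₁ (u₀, l₀), ∀ y ∈ K x l₀, (F x y u₀ ∩ (-C)ᶜ).Nonempty) :
    LscAt M₁ (u₀, l₀) := by
  refine fun x₀ hx₀M V hV hx₀V => eventually_iff_exists_mem.mp ?_
  by_contra hnotV
  have hfix : ∀ p, ∀ x ∈ M₁ p, x ∈ D ∧ x ∈ K x p.2 := fun p x hx => by
    rw [hM₁] at hx
    exact ⟨hx.1, (hKval x hx.1 p.2).2.1.closure_eq ▸ hx.2.1⟩
  obtain ⟨hx₀D, hx₀K⟩ := hfix _ x₀ hx₀M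
  have hfar : ∃ᶠ l in 𝓝 l₀, ∃ x ∈ D ∩ Vᶜ, x ∈ K x l := by
    refine (continuous_snd.tendsto (u₀, l₀)).frequently ?_
    refine ((not_eventually.mp hnotV).and_eventually (eventually_iff_exists_mem.mpr hMne)).mono ?_
    rintro p ⟨hpV, x, hx⟩
    exact ⟨x, ⟨(hfix p x hx).1, fun hxV => hpV ⟨x, hx, hxV⟩⟩, (hfix p x hx).2⟩
  obtain ⟨xb, ⟨hxbD, hxbV⟩, hxbK⟩ := exists_fixedPoint_of_frequently hDcomp hV.isClosed_compl
    (fun x hx => (hKcont x hx).1) (fun x hx => (hKval x hx l₀).2.1) hfar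
  have hcl := hKrot.mem_closure_diag_interior ⟨hx₀D, hx₀K⟩ ⟨hxbD, hxbK⟩
    fun h => hxbV (h ▸ hx₀V)
  have hunif := eventually_forall_inter_nonempty hKD
    (hDcomp.of_isClosed_subset (hKval x₀ hx₀D l₀).2.1 (hKD x₀ hx₀D l₀)) (hKcont x₀ hx₀D).1
    (fun y hy => hFlsc x₀ hx₀D y (hKD x₀ hx₀D l₀ hy)) hCclosed.neg.isOpen_compl (hF3 x₀ hx₀M)
  obtain ⟨w, hwint, hwV, hwF⟩ := (mem_closure_iff_frequently.mp hcl).and_eventually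
    ((hV.eventually_mem hx₀V).and hunif.curry_nhds) |>.exists
  obtain ⟨r, hr, hrD, hrK⟩ := exists_closedBall_subset_of_mem_interior_graphOn hwint
  have hwD : w ∈ D := hrD (mem_closedBall_self hr.le)
  have hwfix : ∀ᶠ l in 𝓝 l₀, w ∈ K w l :=
    ((hKcont w hwD).2.lscAt_slice hwD).eventually_mem_of_closedBall_subset
      (fun l => (hKval w hwD l).2.2) (fun l => (hKval w hwD l).2.1) hr hrK
      (hDcomp.of_isClosed_subset isClosed_closedBall hrD)
  refine hnotV (hwF.and ((continuous_snd.tendsto (u₀, l₀)).eventually hwfix) |>.mono ?_)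
  rintro p ⟨hpF, hpK⟩
  refine ⟨w, ?_, hwV⟩
  rw [hM₁]
  exact ⟨hwD, subset_closure hpK, fun y hy => (hpF hwD y hy).mono
    (inter_subset_inter_right _ (compl_subset_compl.mpr (neg_subset_neg.mpr interior_subset)))⟩

/-- Theorem 4.1: lower semicontinuity at `(u₀, λ₀)` of the solution mapping
`M₁(u, λ) = {x ∈ cl K(x,λ) : F(x,y,u) ∩ (Y \ −int C) ≠ ∅ for all y ∈ K(x,λ)}` of the
parametric vector quasiequilibrium problem, under: `K(·,λ₀)` rotund, `K` continuous at
every point of `D × {λ₀}` with nonempty closed convex values, `F` l.s.c. at every point of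
`D × D × {u₀}`, and `F(x,y,u₀) ∩ (Y \ −C) ≠ ∅` for all `x ∈ M₁(u₀,λ₀)`, `y ∈ K(x,λ₀)`.
Reflexivity of the Banach space `X` is encoded as surjectivity of the canonical inclusion
into the double dual. -/
theorem stmt_12 {Λ Ω Y X : Type*}
    [NormedAddCommGroup Λ] [NormedSpace ℝ Λ]
    [NormedAddCommGroup Ω] [NormedSpace ℝ Ω]
    [NormedAddCommGroup Y] [NormedSpace ℝ Y]
    [NormedAddCommGroup X] [NormedSpace ℝ X] [CompleteSpace X]
    (hrefl : Function.Surjective (NormedSpace.inclusionInDoubleDual ℝ X))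
    (D : Set X) (hDne : D.Nonempty) (hDcomp : IsCompact D) (hDconv : Convex ℝ D)
    (K : X → Λ → Set X) (hKD : ∀ x ∈ D, ∀ l : Λ, K x l ⊆ D)
    (F : X → X → Ω → Set Y)
    (C : Set Y) (hCclosed : IsClosed C) (hCint : (interior C).Nonempty)
    (u₀ : Ω) (l₀ : Λ)
    (M₁ : Ω × Λ → Set X)
    (hM₁ : ∀ p : Ω × Λ, M₁ p = {x | x ∈ D ∧ x ∈ closure (K x p.2) ∧
      ∀ y ∈ K x p.2, (F x y p.1 ∩ (-(interior C))ᶜ).Nonempty})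
    (hMne : ∃ U ∈ 𝓝 ((u₀, l₀) : Ω × Λ), ∀ p ∈ U, (M₁ p).Nonempty)
    (hKrot : RotundOn D (fun x => K x l₀))
    (hKcont : ∀ x ∈ D,
      UscWithinAt (fun p : X × Λ => K p.1 p.2) (D ×ˢ (univ : Set Λ)) (x, l₀) ∧
      LscWithinAt (fun p : X × Λ => K p.1 p.2) (D ×ˢ (univ : Set Λ)) (x, l₀))
    (hKval : ∀ x ∈ D, ∀ l : Λ, (K x l).Nonempty ∧ IsClosed (K x l) ∧ Convex ℝ (K x l))
    (hFlsc : ∀ x ∈ D, ∀ y ∈ D,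
      LscWithinAt (fun q : X × X × Ω => F q.1 q.2.1 q.2.2)
        (D ×ˢ D ×ˢ (univ : Set Ω)) (x, y, u₀))
    (hF3 : ∀ x ∈ M₁ (u₀, l₀), ∀ y ∈ K x l₀, (F x y u₀ ∩ (-C)ᶜ).Nonempty) :
    LscAt M₁ (u₀, l₀) :=
  stmt_12_general D hDcomp K hKD F C hCclosed u₀ l₀ M₁ hM₁ hMne hKrot hKcont hKval hFlsc hF3
end

section
/- Let Λ, Ω, Y be normed vector spaces, X a reflexive Banach space, and D a nonempty compact convex subset of X. Let K : D × Λ → 2^D and F : D × D × Ω → 2^Y be set-valued mappings and C ⊆ Y a closed set with nonempty interior; define M₂(u, λ) = {x ∈ cl K(x, λ) : F(x, y, u) ⊆ Y \ (−int C) for all y ∈ K(x, λ)}, and assume M₂(u, λ) ≠ ∅ for all (u, λ) in a neighborhood of (u₀, λ₀) ∈ Ω × Λ. Assume: (i) K(·, λ₀) is rotund and K is continuous at every point of D × {λ₀} with nonempty closed convex values; (ii) F has the strict C-inclusion property at every point of D × D × {u₀}. Then M₂(·, ·) is lower semicontinuous at (u₀, λ₀). -/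
open Filter Topology Set Pointwise

/-- `Ψ` has the strict `C`-inclusion property at `p₀` (relative to the domain `s`): for
every sequence in `s` converging to `p₀`, if `Ψ(p₀) ⊆ Y \ −int C` then
`Ψ(pₙ) ⊆ Y \ −int C` for some index `n`. -/
def StrictCInclusionWithinAt {P Y : Type*} [TopologicalSpace P] [TopologicalSpace Y]
    [NormedAddCommGroup Y] (Ψ : P → Set Y) (C : Set Y) (s : Set P) (p₀ : P) : Prop :=
  ∀ p : ℕ → P, (∀ n, p n ∈ s) → Filter.Tendsto p Filter.atTop (𝓝 p₀) →
    Ψ p₀ ⊆ (-(interior C))ᶜ → ∃ n, Ψ (p n) ⊆ (-(interior C))ᶜ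

/-- Lemma A : limits of sequences of points of (closures of) values of `K` at converging
parameters belong to the limit value, assuming u.s.c. + closed values. -/
theorem aux_closed_limit {Λ X : Type*} [NormedAddCommGroup Λ] [NormedAddCommGroup X]
    (D : Set X) (K : X → Λ → Set X) (l₀ : Λ) (a : X)
    (husc : UscWithinAt (fun p : X × Λ => K p.1 p.2) (D ×ˢ (univ : Set Λ)) (a, l₀))
    (hcl : IsClosed (K a l₀)) (hne : (K a l₀).Nonempty)
    (aseq : ℕ → X) (lseq : ℕ → Λ) (bseq : ℕ → X)
    (haseq : ∀ n, aseq n ∈ D) (hb : ∀ n, bseq n ∈ closure (K (aseq n) (lseq n)))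
    (hta : Tendsto aseq atTop (𝓝 a)) (htl : Tendsto lseq atTop (𝓝 l₀))
    {b : X} (htb : Tendsto bseq atTop (𝓝 b)) : b ∈ K a l₀ := by
  by_contra hbK
  have hd : 0 < Metric.infDist b (K a l₀) := (hcl.notMem_iff_infDist_pos hne).1 hbK
  set d := Metric.infDist b (K a l₀) with hd_def
  set W := {w : X | Metric.infDist w (K a l₀) < d / 2} with hW_def
  have hWopen : IsOpen W := isOpen_lt (Metric.continuous_infDist_pt _) continuous_const
  have hSW : K a l₀ ⊆ W := fun w hw => by
    simp only [hW_def, mem_setOf_eq, Metric.infDist_zero_of_mem hw]; linarith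
  obtain ⟨U, hU, hUsub⟩ := husc W hWopen hSW
  have htp : Tendsto (fun n => (aseq n, lseq n)) atTop (𝓝[D ×ˢ (univ : Set Λ)] (a, l₀)) :=
    tendsto_nhdsWithin_of_tendsto_nhds_of_eventually_within _ (hta.prodMk_nhds htl)
      (Eventually.of_forall fun n => ⟨haseq n, mem_univ _⟩)
  have hev : ∀ᶠ n in atTop, (aseq n, lseq n) ∈ U := htp hU
  have hle : ∀ᶠ n in atTop, Metric.infDist (bseq n) (K a l₀) ≤ d / 2 := by
    filter_upwards [hev] with n hn
    have h1 : K (aseq n) (lseq n) ⊆ W := hUsub _ hn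
    have h2 : closure (K (aseq n) (lseq n)) ⊆ {w | Metric.infDist w (K a l₀) ≤ d / 2} :=
      closure_minimal (fun w hw => by
        have hlt : Metric.infDist w (K a l₀) < d / 2 := h1 hw
        exact le_of_lt hlt)
        (isClosed_le (Metric.continuous_infDist_pt _) continuous_const)
    exact h2 (hb n)
  have hfin : Metric.infDist b (K a l₀) ≤ d / 2 :=
    le_of_tendsto (((Metric.continuous_infDist_pt (K a l₀)).tendsto b).comp htb) hle
  rw [← hd_def] at hfin
  linarith

/-- Lemma B : a point whose value at `l₀` contains a ball around it stays in the value for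
all parameters near `l₀` (uses lower semicontinuity, convexity and closedness of values,
and compactness of a small closed ball). -/
theorem aux_fixed_nearby {Λ X : Type*} [NormedAddCommGroup Λ]
    [NormedAddCommGroup X] [NormedSpace ℝ X]
    (D : Set X) (K : X → Λ → Set X) (l₀ : Λ) (z : X) (hzD : z ∈ D)
    (hlsc : LscWithinAt (fun p : X × Λ => K p.1 p.2) (D ×ˢ (univ : Set Λ)) (z, l₀))
    (hval : ∀ l : Λ, (K z l).Nonempty ∧ IsClosed (K z l) ∧ Convex ℝ (K z l))
    (δ : ℝ) (hδ : 0 < δ) (hball : Metric.ball z δ ⊆ K z l₀)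
    (hballD : Metric.ball z δ ⊆ D) (hDcomp : IsCompact D) :
    ∃ L ∈ 𝓝 l₀, ∀ l ∈ L, z ∈ K z l := by
  set r := δ / 2 with hr_def
  have hr : 0 < r := by positivity
  set ρ := r / 8 with hρ_def
  have hρ : 0 < ρ := by positivity
  have hBsub : Metric.closedBall z r ⊆ Metric.ball z δ :=
    Metric.closedBall_subset_ball (by rw [hr_def]; linarith)
  have hBcomp : IsCompact (Metric.closedBall z r) :=
    hDcomp.of_isClosed_subset Metric.isClosed_closedBall (hBsub.trans hballD)
  obtain ⟨T, hTmem, hTcover⟩ := hBcomp.elim_nhds_subcover (fun w => Metric.ball w ρ)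
    (fun w _ => Metric.ball_mem_nhds w hρ)
  have key : ∀ w ∈ T, ∃ L ∈ 𝓝 l₀, ∀ l ∈ L, (K z l ∩ Metric.ball w ρ).Nonempty := by
    intro w hw
    have hwK : w ∈ K z l₀ := hball (hBsub (hTmem w hw))
    obtain ⟨U, hU, hU2⟩ := hlsc w hwK (Metric.ball w ρ) Metric.isOpen_ball
      (Metric.mem_ball_self hρ)
    rw [mem_nhdsWithin] at hU
    obtain ⟨O, hOopen, hOz, hOsub⟩ := hU
    refine ⟨{l | ((z, l) : X × Λ) ∈ O}, ?_, fun l hl => hU2 (z, l) (hOsub ⟨hl, hzD, mem_univ _⟩)⟩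
    exact (hOopen.preimage (Continuous.prodMk_right z)).mem_nhds hOz
  choose! L hLmem hLprop using key
  refine ⟨⋂ w ∈ T, L w, (biInter_finset_mem T).2 hLmem, fun l hl => ?_⟩
  by_contra hzK
  obtain ⟨hKne, hKcl, hKconv⟩ := hval l
  obtain ⟨f, u, hfu, hub⟩ := geometric_hahn_banach_point_closed hKconv hKcl hzK
  obtain ⟨b0, hb0⟩ := hKne
  have hf0 : f ≠ 0 := by
    intro h
    have h1 := hub b0 hb0
    rw [h] at hfu h1
    simp only [ContinuousLinearMap.zero_apply] at hfu h1
    linarith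
  have hnf : 0 < ‖f‖ := norm_pos_iff.mpr hf0
  have hx : ∃ x : X, (3 / 4) * ‖f‖ * ‖x‖ < ‖f x‖ := by
    by_contra h
    push_neg at h
    have := f.opNorm_le_bound (by positivity) h
    linarith
  obtain ⟨x, hx⟩ := hx
  have hxne : x ≠ 0 := by
    rintro rfl
    rw [norm_zero, mul_zero, map_zero, norm_zero] at hx
    exact lt_irrefl 0 hx
  have hxn : 0 < ‖x‖ := norm_pos_iff.mpr hxne
  set c : ℝ := (if 0 ≤ f x then (-1 : ℝ) else 1) * ‖x‖⁻¹ with hc_def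
  set v : X := c • x with hv_def
  have hvnorm : ‖v‖ = 1 := by
    rw [hv_def, norm_smul, hc_def, Real.norm_eq_abs, abs_mul]
    have h1 : |(if 0 ≤ f x then (-1 : ℝ) else 1)| = 1 := by
      rcases le_or_gt 0 (f x) with h | h <;> simp [h, not_le.mpr]
    rw [h1, one_mul, abs_inv, abs_of_pos hxn]
    field_simp
  have key : (3 / 4) * ‖f‖ < ‖x‖⁻¹ * ‖f x‖ := by
    have h1 : (3 / 4) * ‖f‖ * ‖x‖ * ‖x‖⁻¹ < ‖f x‖ * ‖x‖⁻¹ :=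
      mul_lt_mul_of_pos_right hx (inv_pos.mpr hxn)
    have h2 : ‖x‖ * ‖x‖⁻¹ = 1 := mul_inv_cancel₀ hxn.ne'
    calc (3 / 4) * ‖f‖ = (3 / 4) * ‖f‖ * (‖x‖ * ‖x‖⁻¹) := by rw [h2, mul_one]
      _ = (3 / 4) * ‖f‖ * ‖x‖ * ‖x‖⁻¹ := by ring
      _ < ‖f x‖ * ‖x‖⁻¹ := h1
      _ = ‖x‖⁻¹ * ‖f x‖ := by ring
  have hfv : f v < -((3 / 4) * ‖f‖) := by
    have hcal : f v = -(‖x‖⁻¹ * ‖f x‖) := by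
      rw [hv_def, map_smul, smul_eq_mul, hc_def]
      rcases le_or_gt 0 (f x) with h | h
      · rw [if_pos h, Real.norm_eq_abs, abs_of_nonneg h]; ring
      · rw [if_neg (not_le.mpr h), Real.norm_eq_abs, abs_of_neg h]; ring
    rw [hcal]
    linarith
  set w : X := z + r • v with hw_def
  have hwB : w ∈ Metric.closedBall z r := by
    rw [Metric.mem_closedBall, hw_def, dist_eq_norm]
    simp [norm_smul, hvnorm, abs_of_pos hr]
  have hwcov := hTcover hwB
  rw [mem_iUnion₂] at hwcov
  obtain ⟨i, hiT, hwi⟩ := hwcov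
  have hlL : l ∈ L i := by
    have := mem_iInter₂.mp hl i hiT
    exact this
  obtain ⟨a, haK, haB⟩ := hLprop i hiT l hlL
  have h1 : u < f a := hub a haK
  have hdaw : ‖a - w‖ ≤ r / 4 := by
    have d1 : dist a i < ρ := Metric.mem_ball.mp haB
    have d2 : dist w i < ρ := Metric.mem_ball.mp hwi
    have : dist a w ≤ dist a i + dist w i := dist_triangle_right a w i
    rw [← dist_eq_norm]
    rw [hρ_def] at d1 d2
    linarith
  have e1 : f (a - w) ≤ ‖f‖ * ‖a - w‖ :=
    le_trans (le_abs_self _) (by rw [← Real.norm_eq_abs]; exact f.le_opNorm _)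
  have e3 : ‖f‖ * ‖a - w‖ ≤ ‖f‖ * (r / 4) := mul_le_mul_of_nonneg_left hdaw hnf.le
  have e4 : f w = f z + r * f v := by
    rw [hw_def, map_add, map_smul, smul_eq_mul]
  have e5 : r * f v ≤ r * (-((3 / 4) * ‖f‖)) := by
    exact le_of_lt (mul_lt_mul_of_pos_left hfv hr)
  have e6 : f a = f w + f (a - w) := by
    rw [← map_add]; congr 1; abel
  nlinarith [mul_pos hr hnf]

/-- Theorem 4.4: lower semicontinuity at `(u₀, λ₀)` of the solution mapping `M₂` of the
strong parametric vector quasiequilibrium problem, under: `K(·,λ₀)` rotund, `K` continuous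
at every point of `D × {λ₀}` with nonempty closed convex values, and `F` having the strict
`C`-inclusion property at every point of `D × D × {u₀}`. Reflexivity of the Banach space
`X` is encoded as surjectivity of the canonical inclusion into the double dual. -/
theorem stmt_15 {Λ Ω Y X : Type*}
    [NormedAddCommGroup Λ] [NormedSpace ℝ Λ]
    [NormedAddCommGroup Ω] [NormedSpace ℝ Ω]
    [NormedAddCommGroup Y] [NormedSpace ℝ Y]
    [NormedAddCommGroup X] [NormedSpace ℝ X] [CompleteSpace X]
    (hrefl : Function.Surjective (NormedSpace.inclusionInDoubleDual ℝ X))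
    (D : Set X) (hDne : D.Nonempty) (hDcomp : IsCompact D) (hDconv : Convex ℝ D)
    (K : X → Λ → Set X) (hKD : ∀ x ∈ D, ∀ l : Λ, K x l ⊆ D)
    (F : X → X → Ω → Set Y)
    (C : Set Y) (hCclosed : IsClosed C) (hCint : (interior C).Nonempty)
    (u₀ : Ω) (l₀ : Λ)
    (M₂ : Ω × Λ → Set X)
    (hM₂ : ∀ p : Ω × Λ, M₂ p = {x | x ∈ D ∧ x ∈ closure (K x p.2) ∧
      ∀ y ∈ K x p.2, F x y p.1 ⊆ (-(interior C))ᶜ})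
    (hMne : ∃ U ∈ 𝓝 ((u₀, l₀) : Ω × Λ), ∀ p ∈ U, (M₂ p).Nonempty)
    (hKrot : RotundOn D (fun x => K x l₀))
    (hKcont : ∀ x ∈ D,
      UscWithinAt (fun p : X × Λ => K p.1 p.2) (D ×ˢ (univ : Set Λ)) (x, l₀) ∧
      LscWithinAt (fun p : X × Λ => K p.1 p.2) (D ×ˢ (univ : Set Λ)) (x, l₀))
    (hKval : ∀ x ∈ D, ∀ l : Λ, (K x l).Nonempty ∧ IsClosed (K x l) ∧ Convex ℝ (K x l))
    (hFincl : ∀ x ∈ D, ∀ y ∈ D,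
      StrictCInclusionWithinAt (fun q : X × X × Ω => F q.1 q.2.1 q.2.2) C
        (D ×ˢ D ×ˢ (univ : Set Ω)) (x, y, u₀)) :
    LscAt M₂ (u₀, l₀) := by
  intro x₀ hx₀ V hV hx₀V
  by_contra hcon
  push_neg at hcon
  obtain ⟨U₀, hU₀, hU₀ne⟩ := hMne
  rw [hM₂] at hx₀
  obtain ⟨hx₀D, hx₀cl0, hx₀F0⟩ := hx₀
  have hKx₀ := hKval x₀ hx₀D l₀
  have hx₀cl : x₀ ∈ closure (K x₀ l₀) := hx₀cl0
  have hx₀F : ∀ y ∈ K x₀ l₀, F x₀ y u₀ ⊆ (-(interior C))ᶜ := hx₀F0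
  have hx₀K : x₀ ∈ K x₀ l₀ := by rwa [hKx₀.2.1.closure_eq] at hx₀cl
  -- a sequence of parameters converging to `(u₀, l₀)` whose solution sets miss `V`
  have hseq : ∀ n : ℕ, ∃ q : Ω × Λ, q ∈ U₀ ∧ dist q (u₀, l₀) < 1 / (n + 1) ∧
      M₂ q ∩ V = ∅ := by
    intro n
    obtain ⟨q, hq, hqbad⟩ := hcon (Metric.ball (u₀, l₀) (1 / (n + 1)) ∩ U₀)
      (Filter.inter_mem (Metric.ball_mem_nhds _ (by positivity)) hU₀)
    exact ⟨q, hq.2, Metric.mem_ball.mp hq.1, hqbad⟩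
  choose p hpU₀ hpdist hpbad using hseq
  have hdiv : ∀ {N n : ℕ}, N ≤ n → (1 : ℝ) / (n + 1) ≤ 1 / (N + 1) := by
    intro N n hn
    apply one_div_le_one_div_of_le (by positivity)
    have : (N : ℝ) ≤ n := by exact_mod_cast hn
    linarith
  have hptend : Tendsto p atTop (𝓝 (u₀, l₀)) := by
    rw [Metric.tendsto_atTop]
    intro ε hε
    obtain ⟨N, hN⟩ := exists_nat_one_div_lt hε
    exact ⟨N, fun n hn => (hpdist n).trans_le ((hdiv hn).trans hN.le)⟩
  have hbad : ∀ n, ∀ x, ¬(x ∈ M₂ (p n) ∧ x ∈ V) := fun n x hx =>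
    (eq_empty_iff_forall_notMem.mp (hpbad n) x) ⟨hx.1, hx.2⟩
  choose xs hxs using fun n => hU₀ne _ (hpU₀ n)
  have hxsd : ∀ n, xs n ∈ D ∧ xs n ∈ closure (K (xs n) ((p n).2)) ∧
      ∀ y ∈ K (xs n) ((p n).2), F (xs n) y ((p n).1) ⊆ (-(interior C))ᶜ := by
    intro n
    have h := hxs n
    rw [hM₂] at h
    exact h
  have hxsD : ∀ n, xs n ∈ D := fun n => (hxsd n).1
  have hxscl : ∀ n, xs n ∈ closure (K (xs n) ((p n).2)) := fun n => (hxsd n).2.1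
  have hxsV : ∀ n, xs n ∉ V := fun n h => hbad n (xs n) ⟨hxs n, h⟩
  obtain ⟨xb, hxbD, φ, hφ, hφt⟩ := hDcomp.tendsto_subseq hxsD
  have hpφ : Tendsto (fun j => p (φ j)) atTop (𝓝 (u₀, l₀)) := hptend.comp hφ.tendsto_atTop
  have hlamphi : Tendsto (fun j => (p (φ j)).2) atTop (𝓝 l₀) := (continuous_snd.tendsto _).comp hpφ
  have hKxb := hKval xb hxbD l₀
  have hxbK : xb ∈ K xb l₀ :=
    aux_closed_limit D K l₀ xb (hKcont xb hxbD).1 hKxb.2.1 hKxb.1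
      (fun j => xs (φ j)) (fun j => (p (φ j)).2) (fun j => xs (φ j))
      (fun j => hxsD _) (fun j => hxscl _) hφt hlamphi hφt
  have hxbV : xb ∉ V := by
    intro h
    have h2 : ∀ᶠ j in atTop, xs (φ j) ∈ V := hφt (hV.mem_nhds h)
    obtain ⟨j, hj⟩ := h2.exists
    exact hxsV _ hj
  have hnex : x₀ ≠ xb := fun h => hxbV (h ▸ hx₀V)
  -- rotundity gives a diagonal interior point of the graph of `K (·) l₀`
  have hG1 : ((x₀, x₀) : X × X) ∈ GraphOn D (fun x => K x l₀) := ⟨hx₀D, hx₀K⟩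
  have hG2 : ((xb, xb) : X × X) ∈ GraphOn D (fun x => K x l₀) := ⟨hxbD, hxbK⟩
  obtain ⟨t, ht, htmem⟩ := hKrot.2 _ hG1 _ hG2 hnex hnex
  have hPG : t • ((x₀, x₀) : X × X) + (1 - t) • ((xb, xb) : X × X)
      ∈ GraphOn D (fun x => K x l₀) :=
    hKrot.1 hG1 hG2 ht.1.le (by linarith [ht.2]) (by ring)
  have hPint : t • ((x₀, x₀) : X × X) + (1 - t) • ((xb, xb) : X × X)
      ∈ interior (GraphOn D (fun x => K x l₀)) := by
    by_contra h
    exact htmem ⟨subset_closure hPG, h⟩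
  set qh : X := t • x₀ + (1 - t) • xb with hqh
  have hPq : (t • ((x₀, x₀) : X × X) + (1 - t) • ((xb, xb) : X × X)) = ((qh, qh) : X × X) := rfl
  rw [hPq] at hPint
  -- a sequence of diagonal interior points converging to `x₀`
  set ζ : ℕ → X := fun k => (1 / (k + 2) : ℝ) • qh + (1 - 1 / (k + 2) : ℝ) • x₀ with hζ
  have hζint : ∀ k, ((ζ k, ζ k) : X × X) ∈ interior (GraphOn D (fun x => K x l₀)) := by
    intro k
    have hpos : (0 : ℝ) < 1 / (k + 2) := by positivity
    have hle1 : (1 : ℝ) / (k + 2) ≤ 1 := by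
      rw [div_le_one (by positivity)]
      have : (0 : ℝ) ≤ k := Nat.cast_nonneg k
      linarith
    have h := hKrot.1.combo_interior_closure_mem_interior (a := (1 / (k + 2) : ℝ))
      (b := (1 - 1 / (k + 2) : ℝ)) hPint (subset_closure hG1) hpos (by linarith) (by ring)
    rw [Prod.smul_mk, Prod.smul_mk, Prod.mk_add_mk] at h
    simp only [hζ]
    exact h
  have hζD : ∀ k, ζ k ∈ D := fun k => (interior_subset (hζint k)).1
  have hζball : ∀ k, ∃ δ > 0, Metric.ball (ζ k) δ ⊆ K (ζ k) l₀ := by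
    intro k
    obtain ⟨δ, hδ, hbsub⟩ := Metric.isOpen_iff.mp isOpen_interior _ (hζint k)
    refine ⟨δ, hδ, fun w hw => ?_⟩
    have hmem : ((ζ k, w) : X × X) ∈ interior (GraphOn D (fun x => K x l₀)) := by
      apply hbsub
      rw [Metric.mem_ball, Prod.dist_eq]
      simp only [dist_self]
      exact max_lt hδ (Metric.mem_ball.mp hw)
    exact (interior_subset hmem).2
  have hζtend : Tendsto ζ atTop (𝓝 x₀) := by
    have hat : Tendsto (fun k : ℕ => ((k : ℝ) + 2)) atTop atTop :=
      tendsto_atTop_add_const_right _ 2 tendsto_natCast_atTop_atTop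
    have h0 : Tendsto (fun k : ℕ => (1 / (k + 2) : ℝ)) atTop (𝓝 0) := by
      simp only [one_div]
      exact hat.inv_tendsto_atTop
    have h1 : Tendsto (fun k : ℕ => (1 / (k + 2) : ℝ) • qh + (1 - 1 / (k + 2) : ℝ) • x₀)
        atTop (𝓝 ((0 : ℝ) • qh + ((1 : ℝ) - 0) • x₀)) :=
      (h0.smul_const qh).add
        (((tendsto_const_nhds : Tendsto (fun _ : ℕ => (1 : ℝ)) atTop (𝓝 1)).sub h0).smul_const x₀)
    rw [hζ]
    simpa using h1
  -- each `ζ k` remains a fixed point of `K (ζ k) ·` near `l₀`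
  have hLk : ∀ k, ∃ L ∈ 𝓝 l₀, ∀ l ∈ L, ζ k ∈ K (ζ k) l := by
    intro k
    obtain ⟨δ, hδ, hbs⟩ := hζball k
    have hbD : Metric.ball (ζ k) δ ⊆ D := hbs.trans (hKD _ (hζD k) l₀)
    exact aux_fixed_nearby D K l₀ (ζ k) (hζD k) (hKcont (ζ k) (hζD k)).2
      (fun l => hKval (ζ k) (hζD k) l) δ hδ hbs hbD hDcomp
  choose L hLmem hLfix using hLk
  -- diagonal extraction
  have hzpick : ∀ k : ℕ, ∃ j, ζ j ∈ V ∧ dist (ζ j) x₀ < 1 / (k + 1) := by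
    intro k
    have h1 : ∀ᶠ j in atTop, ζ j ∈ V := hζtend (hV.mem_nhds hx₀V)
    have h2 : ∀ᶠ j in atTop, dist (ζ j) x₀ < 1 / (k + 1) := by
      have h3 := hζtend (Metric.ball_mem_nhds x₀ (show (0 : ℝ) < 1 / (k + 1) by positivity))
      filter_upwards [h3] with j hj
      exact Metric.mem_ball.mp hj
    exact (h1.and h2).exists
  choose jd hjV hjdist using hzpick
  have hnpick : ∀ k : ℕ, ∃ n, k ≤ n ∧ (p n).2 ∈ L (jd k) := by
    intro k
    have h1 : ∀ᶠ n in atTop, (p n).2 ∈ L (jd k) :=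
      ((continuous_snd.tendsto _).comp hptend) (hLmem (jd k))
    exact ((eventually_ge_atTop k).and h1).exists
  choose nn hnge hnmem using hnpick
  set z : ℕ → X := fun k => ζ (jd k) with hzdef
  have hzfix : ∀ k, z k ∈ K (z k) ((p (nn k)).2) := fun k => hLfix _ _ (hnmem k)
  have hzD2 : ∀ k, z k ∈ D := fun k => hζD _
  have hztend : Tendsto z atTop (𝓝 x₀) := by
    rw [Metric.tendsto_atTop]
    intro ε hε
    obtain ⟨N, hN⟩ := exists_nat_one_div_lt hε
    exact ⟨N, fun k hk => (hjdist k).trans_le ((hdiv hk).trans hN.le)⟩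
  have hpnn : Tendsto (fun k => p (nn k)) atTop (𝓝 (u₀, l₀)) := by
    rw [Metric.tendsto_atTop] at hptend ⊢
    intro ε hε
    obtain ⟨N, hN⟩ := hptend ε hε
    exact ⟨N, fun k hk => hN _ (hk.trans (hnge k))⟩
  -- each `z k` fails to be a solution at `p (nn k)` only through the `F`-condition
  have hy : ∀ k, ∃ y, y ∈ K (z k) ((p (nn k)).2) ∧
      ¬(F (z k) y ((p (nn k)).1) ⊆ (-(interior C))ᶜ) := by
    intro k
    have hznot : z k ∉ M₂ (p (nn k)) := fun h => hbad (nn k) (z k) ⟨h, hjV k⟩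
    rw [hM₂] at hznot
    by_contra hno
    push_neg at hno
    exact hznot ⟨hzD2 k, subset_closure (hzfix k), hno⟩
  choose ys hysK hysbad using hy
  have hysD : ∀ k, ys k ∈ D := fun k => hKD _ (hzD2 k) _ (hysK k)
  obtain ⟨yb, hybD, ψ, hψ, hψt⟩ := hDcomp.tendsto_subseq hysD
  have hzψ : Tendsto (fun j => z (ψ j)) atTop (𝓝 x₀) := hztend.comp hψ.tendsto_atTop
  have hpψ : Tendsto (fun j => p (nn (ψ j))) atTop (𝓝 (u₀, l₀)) := hpnn.comp hψ.tendsto_atTop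
  have hlampsi : Tendsto (fun j => (p (nn (ψ j))).2) atTop (𝓝 l₀) :=
    (continuous_snd.tendsto _).comp hpψ
  have huψ : Tendsto (fun j => (p (nn (ψ j))).1) atTop (𝓝 u₀) :=
    (continuous_fst.tendsto _).comp hpψ
  have hybK : yb ∈ K x₀ l₀ :=
    aux_closed_limit D K l₀ x₀ (hKcont x₀ hx₀D).1 hKx₀.2.1 hKx₀.1
      (fun j => z (ψ j)) (fun j => (p (nn (ψ j))).2) (fun j => ys (ψ j))
      (fun j => hzD2 _) (fun j => subset_closure (hysK _)) hzψ hlampsi hψt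
  have hFsub : F x₀ yb u₀ ⊆ (-(interior C))ᶜ := hx₀F yb hybK
  obtain ⟨j, hj⟩ := hFincl x₀ hx₀D yb hybD
    (fun j => (z (ψ j), ys (ψ j), (p (nn (ψ j))).1))
    (fun j => ⟨hzD2 _, hysD _, mem_univ _⟩)
    (hzψ.prodMk_nhds (hψt.prodMk_nhds huψ)) hFsub
  exact hysbad (ψ j) hj
end
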